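/- arXiv:2410.22137 — 8 statements merged into one kernel-verified Lean document; each statement's English description precedes it below -/
import Mathlib

section
/- The face graph of a vertex-faithful simplicial surface is 3-connected. -/
/-- A (closed) simplicial surface: vertices `V`, edges `E`, faces `F` with
incidence relations satisfying the axioms of Definition 2.3, including the
umbrella condition. -/
structure SimplicialSurface (V E F : Type) where
  vinc : V → E → Prop
  einc : E → F → Prop
  vfinc : V → F → Prop
  vfinc_iff : ∀ v f, vfinc v f ↔ ∃ e, vinc v e ∧ einc e f
  edge_two_vertices : ∀ e, {v | vinc v e}.ncard = 2
  edge_two_faces : ∀ e, {f | einc e f}.ncard = 2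
  face_three_edges : ∀ f, {e | einc e f}.ncard = 3
  face_three_vertices : ∀ f, {v | vfinc v f}.ncard = 3
  face_vertex_two_edges : ∀ f v, vfinc v f → {e | einc e f ∧ vinc v e}.ncard = 2
  /-- Umbrella condition: the faces incident to `v` can be arranged in a cyclic
  sequence, consecutive members sharing an edge through `v`. -/
  umbrella : ∀ v, ∃ n, 2 ≤ n ∧ ∃ (fa : ZMod n → F) (ed : ZMod n → E),
    Function.Injective fa ∧ Function.Injective ed ∧
    (∀ f, vfinc v f ↔ ∃ i, fa i = f) ∧
    (∀ e, vinc v e ↔ ∃ i, ed i = e) ∧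
    (∀ i, einc (ed i) (fa i) ∧ einc (ed i) (fa (i + 1)))

variable {V E F : Type}

/-- Edges and faces are uniquely determined by their incident vertex sets. -/
def SimplicialSurface.VertexFaithful (S : SimplicialSurface V E F) : Prop :=
  (∀ e e', {v | S.vinc v e} = {v | S.vinc v e'} → e = e') ∧
  (∀ f f', {v | S.vfinc v f} = {v | S.vfinc v f'} → f = f')

/-- The face graph: nodes are faces, two faces adjacent iff they share an edge. -/
def SimplicialSurface.faceGraph (S : SimplicialSurface V E F) : SimpleGraph F :=
  SimpleGraph.fromRel (fun f g => ∃ e, S.einc e f ∧ S.einc e g)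

/-- The edge graph: nodes are vertices, two vertices adjacent iff they lie on a common edge. -/
def SimplicialSurface.edgeGraph (S : SimplicialSurface V E F) : SimpleGraph V :=
  SimpleGraph.fromRel (fun v w => ∃ e, S.vinc v e ∧ S.vinc w e)

/-- Euler characteristic `|X0| - |X1| + |X2|`. -/
noncomputable def SimplicialSurface.eulerChar (_S : SimplicialSurface V E F) : ℤ :=
  (Nat.card V : ℤ) - (Nat.card E : ℤ) + (Nat.card F : ℤ)

namespace SSaux

lemma ncard_finite {α : Type*} {s : Set α} {k : ℕ} (h : s.ncard = k) (hk : k ≠ 0) : s.Finite := by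
  by_contra hs
  rw [Set.Infinite.ncard (by simpa using hs)] at h; omega

variable (S : SimplicialSurface V E F)

lemma vfinc_of {v e f} (h1 : S.vinc v e) (h2 : S.einc e f) : S.vfinc v f :=
  (S.vfinc_iff v f).2 ⟨e, h1, h2⟩

/-- the two vertices of an edge -/
lemma edge_vertices (e : E) : ∃ a b, a ≠ b ∧ {v | S.vinc v e} = {a, b} :=
  Set.ncard_eq_two.1 (S.edge_two_vertices e)

/-- the other face of an edge -/
lemma other_face {e : E} {f : F} (h : S.einc e f) :
    ∃ g, g ≠ f ∧ S.einc e g ∧ ∀ g', S.einc e g' → g' = f ∨ g' = g := by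
  obtain ⟨a, b, hab, hset⟩ := Set.ncard_eq_two.1 (S.edge_two_faces e)
  have hf : f ∈ ({a, b} : Set F) := hset ▸ h
  rcases hf with rfl | hf
  · exact ⟨b, fun hb => hab hb.symm, by rw [show S.einc e b ↔ b ∈ {f | S.einc e f} from Iff.rfl, hset]; right; rfl,
      fun g' hg' => by have : g' ∈ ({f, b} : Set F) := hset ▸ hg'; simpa using this⟩
  · rcases hf with rfl
    exact ⟨a, fun ha => hab ha, by rw [show S.einc e a ↔ a ∈ {f | S.einc e f} from Iff.rfl, hset]; left; rfl,
      fun g' hg' => by have : g' ∈ ({a, f} : Set F) := hset ▸ hg'; rw [Set.mem_insert_iff, Set.mem_singleton_iff] at this; tauto⟩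

/-- faces of an edge are exactly two given faces -/
lemma edge_faces_eq {e : E} {f g : F} (hf : S.einc e f) (hg : S.einc e g) (hfg : f ≠ g) :
    {f' | S.einc e f'} = {f, g} := by
  refine (Set.eq_of_subset_of_ncard_le ?_ ?_ (ncard_finite (S.edge_two_faces e) (by norm_num))).symm
  · rintro x (rfl | rfl); exact hf; exact hg
  · rw [S.edge_two_faces e, Set.ncard_pair hfg]

lemma edge_vsub_face {e : E} {f : F} (h : S.einc e f) :
    {v | S.vinc v e} ⊆ {v | S.vfinc v f} := fun v hv => vfinc_of S hv h

/-- faces with equal vertex sets after 3-subset inclusion -/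
lemma face_eq_of_vsub (hvf : S.VertexFaithful) {f g : F}
    (h : {v | S.vfinc v f} ⊆ {v | S.vfinc v g}) : f = g := by
  apply hvf.2
  exact Set.eq_of_subset_of_ncard_le h
    (by rw [S.face_three_vertices, S.face_three_vertices])
    (ncard_finite (S.face_three_vertices g) (by norm_num))

/-- L1: two distinct edges cannot join the same pair of distinct faces -/
lemma two_edges (hvf : S.VertexFaithful) {e e' : E} {f g : F} (hee : e ≠ e')
    (h1 : S.einc e f) (h2 : S.einc e g) (h3 : S.einc e' f) (h4 : S.einc e' g)
    (hfg : f ≠ g) : False := by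
  have hVne : {v | S.vinc v e} ≠ {v | S.vinc v e'} := fun h => hee (hvf.1 _ _ h)
  -- find x in e' \ e
  have hsub : ¬ ({v | S.vinc v e'} ⊆ {v | S.vinc v e}) := by
    intro hsub
    exact hVne (Set.eq_of_subset_of_ncard_le hsub
      (by rw [S.edge_two_vertices, S.edge_two_vertices])
      (ncard_finite (S.edge_two_vertices e) (by norm_num))).symm
  obtain ⟨x, hx', hx⟩ := Set.not_subset.1 hsub
  obtain ⟨a, b, hab, hV⟩ := edge_vertices S e
  have ha : S.vinc a e := by rw [show S.vinc a e ↔ a ∈ {v | S.vinc v e} from Iff.rfl, hV]; left; rfl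
  have hb : S.vinc b e := by rw [show S.vinc b e ↔ b ∈ {v | S.vinc v e} from Iff.rfl, hV]; right; rfl
  have hxa : x ≠ a := fun h => hx (h ▸ ha)
  have hxb : x ≠ b := fun h => hx (h ▸ hb)
  have hsub3 : ∀ h : F, S.einc e h → S.einc e' h → {a, b, x} ⊆ {v | S.vfinc v h} := by
    intro h he he'
    rintro v (rfl | rfl | rfl)
    · exact vfinc_of S ha he
    · exact vfinc_of S hb he
    · exact vfinc_of S hx' he'
  have h3card : ({a, b, x} : Set V).ncard = 3 := by
    rw [Set.ncard_insert_of_notMem (by simp [hab, hxa.symm]) (Set.toFinite _),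
        Set.ncard_pair (Ne.symm hxb)]
  have hVf : {a, b, x} = {v | S.vfinc v f} :=
    Set.eq_of_subset_of_ncard_le (hsub3 f h1 h3)
      (by rw [S.face_three_vertices, h3card])
      (ncard_finite (S.face_three_vertices f) (by norm_num))
  have hVg : {a, b, x} = {v | S.vfinc v g} :=
    Set.eq_of_subset_of_ncard_le (hsub3 g h2 h4)
      (by rw [S.face_three_vertices, h3card])
      (ncard_finite (S.face_three_vertices g) (by norm_num))
  exact hfg (hvf.2 _ _ (hVf ▸ hVg))

end SSaux

namespace SSaux
variable (S : SimplicialSurface V E F)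

/-- decompose face vertex set given two distinct members -/
lemma face_triple {f : F} {a b : V} (ha : S.vfinc a f) (hb : S.vfinc b f) (hab : a ≠ b) :
    ∃ c, c ≠ a ∧ c ≠ b ∧ S.vfinc c f ∧ {v | S.vfinc v f} = {a, b, c} := by
  obtain ⟨p, q, r, hpq, hpr, hqr, hV⟩ := Set.ncard_eq_three.1 (S.face_three_vertices f)
  have hmem : ∀ v, S.vfinc v f ↔ v ∈ ({p, q, r} : Set V) := fun v => by
    rw [show S.vfinc v f ↔ v ∈ {v | S.vfinc v f} from Iff.rfl, hV]
  have haM := (hmem a).1 ha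
  have hbM := (hmem b).1 hb
  -- c is the element of {p,q,r} different from a,b
  have : ∃ c ∈ ({p, q, r} : Set V), c ≠ a ∧ c ≠ b := by
    simp only [Set.mem_insert_iff, Set.mem_singleton_iff] at haM hbM ⊢
    rcases haM with rfl | rfl | rfl <;> rcases hbM with rfl | rfl | rfl <;> first
      | exact absurd rfl hab
      | (exact ⟨r, by tauto, by tauto, by tauto⟩)
      | (exact ⟨q, by tauto, by tauto, by tauto⟩)
      | (exact ⟨p, by tauto, by tauto, by tauto⟩)
  obtain ⟨c, hcM, hca, hcb⟩ := this
  refine ⟨c, hca, hcb, (hmem c).2 hcM, ?_⟩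
  rw [hV]
  refine (Set.eq_of_subset_of_ncard_le ?_ ?_ (Set.toFinite _)).symm
  · rintro x (rfl|rfl|rfl)
    · exact haM
    · exact hbM
    · exact hcM
  · have h3 : ({a, b, c} : Set V).ncard = 3 := by
      rw [Set.ncard_insert_of_notMem (by simp [hab, hca.symm]) (Set.toFinite _),
          Set.ncard_pair (Ne.symm hcb)]
    rw [h3]
    have := S.face_three_vertices f; rw [hV] at this; omega

/-- each pair of distinct vertices of a face spans an edge of the face -/
lemma face_edge_exists (hvf : S.VertexFaithful) {f : F} {a b : V}
    (ha : S.vfinc a f) (hb : S.vfinc b f) (hab : a ≠ b) :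
    ∃ e, S.einc e f ∧ {v | S.vinc v e} = {a, b} := by
  obtain ⟨c, hca, hcb, hc, hV⟩ := face_triple S ha hb hab
  -- two edges of f at a
  obtain ⟨p, q, hpq, hE⟩ := Set.ncard_eq_two.1 (S.face_vertex_two_edges f a ha)
  have hp : S.einc p f ∧ S.vinc a p := by
    have : p ∈ {e | S.einc e f ∧ S.vinc a e} := by rw [hE]; left; rfl
    exact this
  have hq : S.einc q f ∧ S.vinc a q := by
    have : q ∈ {e | S.einc e f ∧ S.vinc a e} := by rw [hE]; right; rfl
    exact this
  -- each of p q has vertex set {a, x} with x ∈ {b, c}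
  have key : ∀ e, S.einc e f → S.vinc a e → ∃ x, x ≠ a ∧ (x = b ∨ x = c) ∧
      {v | S.vinc v e} = {a, x} := by
    intro e hef hae
    obtain ⟨s, t, hst, hVe⟩ := edge_vertices S e
    have haM : a ∈ ({s, t} : Set V) := hVe ▸ hae
    have hsub : ({s, t} : Set V) ⊆ {a, b, c} := by
      rw [← hVe, ← hV]; exact edge_vsub_face S hef
    rcases haM with rfl | haM
    · refine ⟨t, fun h => hst h.symm, ?_, by rw [hVe]⟩
      have := hsub (by right; rfl)
      simp only [Set.mem_insert_iff, Set.mem_singleton_iff] at this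
      rcases this with rfl | h | h
      · exact absurd rfl hst
      · tauto
      · tauto
    · rcases haM with rfl
      refine ⟨s, fun h => hst h, ?_, by rw [hVe, Set.pair_comm]⟩
      have := hsub (by left; rfl)
      simp only [Set.mem_insert_iff, Set.mem_singleton_iff] at this
      rcases this with h | h | h
      · exact absurd h hst
      · tauto
      · tauto
  obtain ⟨x, hxa, hx, hVp⟩ := key p hp.1 hp.2
  obtain ⟨y, hya, hy, hVq⟩ := key q hq.1 hq.2
  have hxy : x ≠ y := by
    rintro rfl
    exact hpq (hvf.1 _ _ (hVp.trans hVq.symm))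
  rcases hx with rfl | rfl
  · exact ⟨p, hp.1, hVp⟩
  · rcases hy with rfl | rfl
    · exact ⟨q, hq.1, hVq⟩
    · exact absurd rfl hxy

/-- two faces sharing two distinct vertices share an edge -/
lemma shared_edge (hvf : S.VertexFaithful) {f g : F} {a b : V}
    (haf : S.vfinc a f) (hbf : S.vfinc b f) (hag : S.vfinc a g) (hbg : S.vfinc b g)
    (hab : a ≠ b) : ∃ e, S.einc e f ∧ S.einc e g ∧ {v | S.vinc v e} = {a, b} := by
  obtain ⟨e, hef, hVe⟩ := face_edge_exists S hvf haf hbf hab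
  obtain ⟨e', heg, hVe'⟩ := face_edge_exists S hvf hag hbg hab
  have : e = e' := hvf.1 _ _ (hVe.trans hVe'.symm)
  exact ⟨e, hef, this ▸ heg, hVe⟩

end SSaux

namespace SSaux
variable (S : SimplicialSurface V E F)

lemma adj_of_edge {e : E} {f g : F} (hf : S.einc e f) (hg : S.einc e g) (hfg : f ≠ g) :
    S.faceGraph.Adj f g := by
  rw [SimplicialSurface.faceGraph, SimpleGraph.fromRel_adj]
  exact ⟨hfg, Or.inl ⟨e, hf, hg⟩⟩

lemma shared_edge_of_adj {f g : F} (h : S.faceGraph.Adj f g) :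
    f ≠ g ∧ ∃ e, S.einc e f ∧ S.einc e g := by
  rw [SimplicialSurface.faceGraph, SimpleGraph.fromRel_adj] at h
  obtain ⟨hne, h | h⟩ := h
  · exact ⟨hne, h⟩
  · obtain ⟨e, h1, h2⟩ := h; exact ⟨hne, e, h2, h1⟩

/-- umbrella with n ≥ 3 (uses vertex-faithfulness) -/
lemma umbrella3 (hvf : S.VertexFaithful) (v : V) :
    ∃ n, 3 ≤ n ∧ ∃ (fa : ZMod n → F) (ed : ZMod n → E),
    Function.Injective fa ∧ Function.Injective ed ∧
    (∀ f, S.vfinc v f ↔ ∃ i, fa i = f) ∧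
    (∀ e, S.vinc v e ↔ ∃ i, ed i = e) ∧
    (∀ i, S.einc (ed i) (fa i) ∧ S.einc (ed i) (fa (i + 1))) := by
  obtain ⟨n, hn2, fa, ed, hfa, hed, hF, hE, hC⟩ := S.umbrella v
  refine ⟨n, ?_, fa, ed, hfa, hed, hF, hE, hC⟩
  rcases Nat.lt_or_ge n 3 with hn | hn
  · exfalso
    interval_cases n
    · -- n = 2
      have h01 : (0 : ZMod 2) ≠ 1 := by decide
      have hff : fa 0 ≠ fa 1 := fun h => h01 (hfa h)
      have hee : ed 0 ≠ ed 1 := fun h => h01 (hed h)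
      have h1 := hC 0
      have h2 := hC 1
      rw [show (1 + 1 : ZMod 2) = 0 by decide] at h2
      rw [show (0 + 1 : ZMod 2) = 1 by decide] at h1
      exact two_edges S hvf hee h1.1 h1.2 h2.2 h2.1 hff
  · exact hn

/-- Core: connectivity of cycle minus at most two adjacent nodes.
Positions in `s` are only `k-1` and `k`. -/
lemma cycle_conn {n : ℕ} (hn : 3 ≤ n) (fa : ZMod n → F) (ed : ZMod n → E)
    (hfa : Function.Injective fa)
    (hC : ∀ i, S.einc (ed i) (fa i) ∧ S.einc (ed i) (fa (i + 1)))
    (s : Set F) (k : ZMod n) (hk : ∀ i, fa i ∈ s → i = k - 1 ∨ i = k) :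
    ∀ i j (hi : fa i ∉ s) (hj : fa j ∉ s),
      (S.faceGraph.induce sᶜ).Reachable ⟨fa i, hi⟩ ⟨fa j, hj⟩ := by
  haveI : NeZero n := ⟨by omega⟩
  haveI : Fact (1 < n) := ⟨by omega⟩
  have hone : (1 : ZMod n) ≠ 0 := one_ne_zero
  -- basic cast fact
  have hcast : ∀ m : ℕ, m < n → m ≠ 0 → ((m : ZMod n) ≠ 0) := by
    intro m hm hm0 h
    have := ZMod.val_natCast_of_lt hm
    rw [h, ZMod.val_zero] at this
    exact hm0 this.symm
  have hsucc_ne : ∀ i : ZMod n, fa i ≠ fa (i + 1) := by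
    intro i h
    have := hfa h
    exact hone (left_eq_add.1 this)
  have hadj : ∀ (i : ZMod n) (h1 : fa i ∉ s) (h2 : fa (i+1) ∉ s),
      (S.faceGraph.induce sᶜ).Adj ⟨fa i, h1⟩ ⟨fa (i+1), h2⟩ := by
    intro i h1 h2
    simpa using adj_of_edge S (hC i).1 (hC i).2 (hsucc_ne i)
  have hk1 : fa (k + 1) ∉ s := by
    intro h
    rcases hk _ h with h' | h'
    · have : (2 : ZMod n) = 0 := by linear_combination h' - k
      exact hcast 2 (by omega) (by omega) (by exact_mod_cast this)
    · exact hone (by linear_combination h' - k)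
  -- chain from k+1
  have key : ∀ m : ℕ, m ≤ n - 2 → ∀ h : fa (k + 1 + m) ∉ s,
      (S.faceGraph.induce sᶜ).Reachable ⟨fa (k+1), hk1⟩ ⟨fa (k+1+m), h⟩ := by
    intro m
    induction m with
    | zero =>
      intro _ h
      simp only [Nat.cast_zero, add_zero]
      exact SimpleGraph.Reachable.refl _
    | succ m ih =>
      intro hm h
      have hpred : fa (k + 1 + m) ∉ s := by
        intro hmem
        rcases hk _ hmem with h' | h'
        · -- k+1+m = k-1, so m+2 ≡ 0
          have : ((m + 2 : ℕ) : ZMod n) = 0 := by push_cast; linear_combination h' - k + 2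
          exact hcast (m+2) (by omega) (by omega) this
        · have : ((m + 1 : ℕ) : ZMod n) = 0 := by push_cast; linear_combination h' - k + 1
          exact hcast (m+1) (by omega) (by omega) this
      have hstep := hadj (k + 1 + m) hpred (by
        convert h using 3; push_cast; ring)
      have hr := ih (by omega) hpred
      refine hr.trans (SimpleGraph.Adj.reachable ?_)
      convert hstep using 2
      push_cast; ring
  -- every valid index reaches k+1
  have reach : ∀ i (hi : fa i ∉ s),
      (S.faceGraph.induce sᶜ).Reachable ⟨fa (k+1), hk1⟩ ⟨fa i, hi⟩ := by
    intro i hi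
    by_cases hik : i = k
    · subst hik
      exact ((hadj i hi hk1).symm).reachable
    · set m := (i - (k + 1)).val with hm
      have hmlt : m < n := ZMod.val_lt _
      have him : i = k + 1 + m := by
        rw [hm, ZMod.natCast_val, ZMod.cast_id]; ring
      have hmne : m ≠ n - 1 := by
        intro h
        apply hik
        rw [him, h]
        have : ((n - 1 : ℕ) : ZMod n) = -1 := by
          have : ((n : ℕ) : ZMod n) = 0 := ZMod.natCast_self n
          push_cast [Nat.cast_sub (by omega : 1 ≤ n)]
          rw [this]; ring
        rw [this]; ring
      have := key m (by omega) (by rw [← him]; exact hi)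
      convert this using 2 <;> rw [him]
  intro i j hi hj
  exact (reach i hi).symm.trans (reach j hj)

end SSaux

namespace SSaux
variable (S : SimplicialSurface V E F)

/-- UL-A: if at most one face of `s` touches `v`, all non-`s` faces at `v`
are connected in the induced graph. -/
lemma umb_conn_one (hvf : S.VertexFaithful) (v : V) (s : Set F)
    (h1 : ∀ f f', S.vfinc v f → S.vfinc v f' → f ∈ s → f' ∈ s → f = f') :
    ∀ f g (hf : S.vfinc v f) (hg : S.vfinc v g) (hf' : f ∉ s) (hg' : g ∉ s),
      (S.faceGraph.induce sᶜ).Reachable ⟨f, hf'⟩ ⟨g, hg'⟩ := by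
  obtain ⟨n, hn, fa, ed, hfa, hed, hF, hE, hC⟩ := umbrella3 S hvf v
  haveI : NeZero n := ⟨by omega⟩
  intro f g hf hg hf' hg'
  obtain ⟨i, rfl⟩ := (hF f).1 hf
  obtain ⟨j, rfl⟩ := (hF g).1 hg
  by_cases hex : ∃ m, fa m ∈ s
  · obtain ⟨m, hm⟩ := hex
    refine cycle_conn S hn fa ed hfa hC s m ?_ i j hf' hg'
    intro i' hi'
    right
    exact hfa (h1 _ _ ((hF _).2 ⟨i', rfl⟩) ((hF _).2 ⟨m, rfl⟩) hi' hm)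
  · refine cycle_conn S hn fa ed hfa hC s 0 ?_ i j hf' hg'
    intro i' hi'
    exact absurd ⟨i', hi'⟩ hex

/-- UL-B: if `s = {f1, f2}` with `f1 ≠ f2` both at `v` sharing an edge at `v`,
all non-`s` faces at `v` are connected in the induced graph. -/
lemma umb_conn_two (hvf : S.VertexFaithful) (v : V) {f1 f2 : F} {e : E}
    (hne : f1 ≠ f2) (hev : S.vinc v e) (he1 : S.einc e f1) (he2 : S.einc e f2) :
    ∀ f g (hf : S.vfinc v f) (hg : S.vfinc v g)
      (hf' : f ∉ ({f1, f2} : Set F)) (hg' : g ∉ ({f1, f2} : Set F)),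
      (S.faceGraph.induce ({f1, f2} : Set F)ᶜ).Reachable ⟨f, hf'⟩ ⟨g, hg'⟩ := by
  obtain ⟨n, hn, fa, ed, hfa, hed, hF, hE, hC⟩ := umbrella3 S hvf v
  haveI : NeZero n := ⟨by omega⟩
  haveI : Fact (1 < n) := ⟨by omega⟩
  intro f g hf hg hf' hg'
  obtain ⟨i, rfl⟩ := (hF f).1 hf
  obtain ⟨j, rfl⟩ := (hF g).1 hg
  obtain ⟨m, rfl⟩ := (hE e).1 hev
  -- the two faces of ed m are exactly fa m and fa (m+1)
  have hmm1 : fa m ≠ fa (m + 1) := by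
    intro h
    have := hfa h
    exact (one_ne_zero (α := ZMod n)) (left_eq_add.1 this)
  have hfaces : {f' | S.einc (ed m) f'} = {fa m, fa (m + 1)} :=
    edge_faces_eq S (hC m).1 (hC m).2 hmm1
  have h1M : f1 ∈ ({fa m, fa (m+1)} : Set F) := hfaces ▸ he1
  have h2M : f2 ∈ ({fa m, fa (m+1)} : Set F) := hfaces ▸ he2
  have hsm : ({f1, f2} : Set F) = {fa m, fa (m+1)} := by
    simp only [Set.mem_insert_iff, Set.mem_singleton_iff] at h1M h2M
    rcases h1M with h1M | h1M <;> rcases h2M with h2M | h2M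
    · exact absurd (h1M.trans h2M.symm) hne
    · rw [h1M, h2M]
    · rw [h1M, h2M]; exact Set.pair_comm _ _
    · exact absurd (h1M.trans h2M.symm) hne
  refine cycle_conn S hn fa ed hfa hC _ (m + 1) ?_ i j hf' hg'
  intro i' hi'
  rw [hsm] at hi'
  rcases hi' with hi' | hi'
  · left; rw [add_sub_cancel_right]; exact hfa hi'
  · right; exact hfa hi'

end SSaux

namespace SSaux
variable (S : SimplicialSurface V E F)

lemma s_two [Finite F] (s : Set F) (hs : s.ncard ≤ 2) {f1 g g' : F}
    (hf1 : f1 ∈ s) (hg : g ∈ s) (hg' : g' ∈ s) (h1 : g ≠ f1) (h2 : g' ≠ f1) : g = g' := by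
  by_contra hne
  have hsub : ({f1, g, g'} : Set F) ⊆ s := by rintro z (rfl | rfl | rfl) <;> assumption
  have h3 : ({f1, g, g'} : Set F).ncard = 3 := by
    rw [Set.ncard_insert_of_notMem (by simp [Ne.symm h1, Ne.symm h2]) (Set.toFinite _),
        Set.ncard_pair hne]
  have := Set.ncard_le_ncard hsub (Set.toFinite s)
  omega

/-- mlA: two vertices `b c` of `f1` touch no other member of `s`. -/
lemma mlA (hvf : S.VertexFaithful) (s : Set F) {f1 : F} {a b c : V}
    (hbc : b ≠ c) (hV : {v | S.vfinc v f1} = {a, b, c})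
    (hQb : ∀ g, g ∈ s → S.vfinc b g → g = f1) (hQc : ∀ g, g ∈ s → S.vfinc c g → g = f1)
    {x y : F} {e1 e2 : E} (hx : x ∉ s) (hy : y ∉ s)
    (he1f : S.einc e1 f1) (he1x : S.einc e1 x) (he2f : S.einc e2 f1) (he2y : S.einc e2 y) :
    (S.faceGraph.induce sᶜ).Reachable ⟨x, hx⟩ ⟨y, hy⟩ := by
  have vfb : S.vfinc b f1 := by rw [show S.vfinc b f1 ↔ b ∈ {v | S.vfinc v f1} from Iff.rfl, hV]; simp
  have vfc : S.vfinc c f1 := by rw [show S.vfinc c f1 ↔ c ∈ {v | S.vfinc v f1} from Iff.rfl, hV]; simp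
  obtain ⟨ebc, hebc, hVbc⟩ := face_edge_exists S hvf vfb vfc hbc
  obtain ⟨p, hpne, hep, _⟩ := other_face S hebc
  have hvbe : S.vinc b ebc := by rw [show S.vinc b ebc ↔ b ∈ {v | S.vinc v ebc} from Iff.rfl, hVbc]; simp
  have hvce : S.vinc c ebc := by rw [show S.vinc c ebc ↔ c ∈ {v | S.vinc v ebc} from Iff.rfl, hVbc]; simp
  have vfbp : S.vfinc b p := vfinc_of S hvbe hep
  have vfcp : S.vfinc c p := vfinc_of S hvce hep
  have hps : p ∉ s := fun h => hpne (hQb p h vfbp)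
  have step : ∀ (z : F) (e : E) (hz : z ∉ s), S.einc e f1 → S.einc e z →
      (S.faceGraph.induce sᶜ).Reachable ⟨z, hz⟩ ⟨p, hps⟩ := by
    intro z e hz hef hez
    obtain ⟨s1, t1, hst, hVe⟩ := edge_vertices S e
    have hsubV : ({s1, t1} : Set V) ⊆ {a, b, c} := by
      rw [← hVe, ← hV]; exact edge_vsub_face S hef
    have hvs1 : S.vinc s1 e := by rw [show S.vinc s1 e ↔ s1 ∈ {v | S.vinc v e} from Iff.rfl, hVe]; simp
    have hvt1 : S.vinc t1 e := by rw [show S.vinc t1 e ↔ t1 ∈ {v | S.vinc v e} from Iff.rfl, hVe]; simp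
    have hbcmem : S.vinc b e ∨ S.vinc c e := by
      have h1 := hsubV (show s1 ∈ ({s1, t1} : Set V) by simp)
      have h2 := hsubV (show t1 ∈ ({s1, t1} : Set V) by simp)
      simp only [Set.mem_insert_iff, Set.mem_singleton_iff] at h1 h2
      rcases h1 with rfl | rfl | rfl
      · rcases h2 with rfl | rfl | rfl
        · exact absurd rfl hst
        · exact Or.inl hvt1
        · exact Or.inr hvt1
      · exact Or.inl hvs1
      · exact Or.inr hvs1
    rcases hbcmem with hbe | hce
    · exact umb_conn_one S hvf b s
        (fun f f' h1 h2 h3 h4 => (hQb f h3 h1).trans (hQb f' h4 h2).symm)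
        z p (vfinc_of S hbe hez) vfbp hz hps
    · exact umb_conn_one S hvf c s
        (fun f f' h1 h2 h3 h4 => (hQc f h3 h1).trans (hQc f' h4 h2).symm)
        z p (vfinc_of S hce hez) vfcp hz hps
  exact (step x e1 hx he1f he1x).trans (step y e2 hy he2f he2y).symm

/-- mlB: another face `f2` of `s` touches `f1` at vertices `a`, `b`. -/
lemma mlB [Finite F] (hvf : S.VertexFaithful) (s : Set F) (hs : s.ncard ≤ 2)
    {f1 f2 : F} (hf1 : f1 ∈ s) (hf2 : f2 ∈ s) (hne : f2 ≠ f1) {a b c : V}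
    (hab : a ≠ b) (hV : {v | S.vfinc v f1} = {a, b, c})
    (h2a : S.vfinc a f2) (h2b : S.vfinc b f2)
    {x y : F} {e1 e2 : E} (hx : x ∉ s) (hy : y ∉ s)
    (he1f : S.einc e1 f1) (he1x : S.einc e1 x) (he2f : S.einc e2 f1) (he2y : S.einc e2 y) :
    (S.faceGraph.induce sᶜ).Reachable ⟨x, hx⟩ ⟨y, hy⟩ := by
  have vfa : S.vfinc a f1 := by rw [show S.vfinc a f1 ↔ a ∈ {v | S.vfinc v f1} from Iff.rfl, hV]; simp
  have vfb : S.vfinc b f1 := by rw [show S.vfinc b f1 ↔ b ∈ {v | S.vfinc v f1} from Iff.rfl, hV]; simp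
  have hQc : ∀ g, g ∈ s → S.vfinc c g → g = f1 := by
    intro g hg hcg
    by_contra hgf1
    have hgf2 : g = f2 := s_two s hs hf1 hg hf2 hgf1 hne
    subst hgf2
    refine hne (face_eq_of_vsub S hvf ?_).symm
    rw [hV]
    rintro w (rfl | rfl | rfl)
    · exact h2a
    · exact h2b
    · exact hcg
  obtain ⟨eab, heab1, heab2, hVab⟩ := shared_edge S hvf vfa vfb h2a h2b hab
  have hfaces : {f' | S.einc eab f'} = {f1, f2} := edge_faces_eq S heab1 heab2 (Ne.symm hne)
  have step : ∀ (z : F) (e : E), z ∉ s → S.einc e f1 → S.einc e z → S.vfinc c z := by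
    intro z e hz hef hez
    have hee : e ≠ eab := by
      rintro rfl
      have : z ∈ ({f1, f2} : Set F) := hfaces ▸ hez
      rcases this with rfl | rfl
      · exact hz hf1
      · exact hz hf2
    obtain ⟨s1, t1, hst, hVe⟩ := edge_vertices S e
    have hsubV : ({s1, t1} : Set V) ⊆ {a, b, c} := by
      rw [← hVe, ← hV]; exact edge_vsub_face S hef
    have hvs1 : S.vinc s1 e := by rw [show S.vinc s1 e ↔ s1 ∈ {v | S.vinc v e} from Iff.rfl, hVe]; simp
    have hvt1 : S.vinc t1 e := by rw [show S.vinc t1 e ↔ t1 ∈ {v | S.vinc v e} from Iff.rfl, hVe]; simp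
    have hce : S.vinc c e := by
      by_contra hc
      have hcs : c ∉ ({s1, t1} : Set V) := by
        rintro (rfl | rfl); exact hc hvs1; exact hc hvt1
      have h1 := hsubV (show s1 ∈ ({s1, t1} : Set V) by simp)
      have h2 := hsubV (show t1 ∈ ({s1, t1} : Set V) by simp)
      simp only [Set.mem_insert_iff, Set.mem_singleton_iff] at h1 h2
      have hs1 : s1 ≠ c := fun h => hcs (by simp [h])
      have ht1 : t1 ≠ c := fun h => hcs (by simp [h])
      have hVeq : ({s1, t1} : Set V) = {a, b} := by
        rcases h1 with rfl | rfl | rfl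
        · rcases h2 with rfl | rfl | rfl
          · exact absurd rfl hst
          · rfl
          · exact absurd rfl ht1
        · rcases h2 with rfl | rfl | rfl
          · exact Set.pair_comm _ _
          · exact absurd rfl hst
          · exact absurd rfl ht1
        · exact absurd rfl hs1
      exact hee (hvf.1 e eab (by rw [hVe, hVab, hVeq]))
    exact vfinc_of S hce hez
  exact umb_conn_one S hvf c s
    (fun f f' h1 h2 h3 h4 => (hQc f h3 h1).trans (hQc f' h4 h2).symm)
    x y (step x e1 hx he1f he1x) (step y e2 hy he2f he2y) hx hy

end SSaux

namespace SSaux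
variable (S : SimplicialSurface V E F)

/-- ML: all neighbours of a face `f1 ∈ s` outside `s` are connected in the
induced graph on `sᶜ`. -/
lemma ml [Finite F] (hvf : S.VertexFaithful) (s : Set F) (hs : s.ncard ≤ 2)
    {f1 : F} (hf1 : f1 ∈ s) {x y : F} {e1 e2 : E} (hx : x ∉ s) (hy : y ∉ s)
    (he1f : S.einc e1 f1) (he1x : S.einc e1 x) (he2f : S.einc e2 f1) (he2y : S.einc e2 y) :
    (S.faceGraph.induce sᶜ).Reachable ⟨x, hx⟩ ⟨y, hy⟩ := by
  obtain ⟨a, b, c, hab, hac, hbc, hV⟩ := Set.ncard_eq_three.1 (S.face_three_vertices f1)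
  have hperm1 : ({a, b, c} : Set V) = {b, a, c} := by ext w; simp; tauto
  have hperm2 : ({a, b, c} : Set V) = {c, a, b} := by ext w; simp; tauto
  have hperm3 : ({a, b, c} : Set V) = {b, c, a} := by ext w; simp; tauto
  have hperm4 : ({a, b, c} : Set V) = {a, c, b} := by ext w; simp; tauto
  by_cases hQa : ∀ g, g ∈ s → S.vfinc a g → g = f1 <;>
    by_cases hQb : ∀ g, g ∈ s → S.vfinc b g → g = f1 <;>
      by_cases hQc : ∀ g, g ∈ s → S.vfinc c g → g = f1
  -- TTT
  · exact mlA S hvf s hbc hV hQb hQc hx hy he1f he1x he2f he2y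
  -- TTF
  · exact mlA S hvf s hab (hV.trans hperm2) hQa hQb hx hy he1f he1x he2f he2y
  -- TFT
  · exact mlA S hvf s hac (hV.trans hperm1) hQa hQc hx hy he1f he1x he2f he2y
  -- TFF : f2 at b and c
  · push_neg at hQb hQc
    obtain ⟨g, hg, hbg, hgne⟩ := hQb
    obtain ⟨g', hg', hcg, hgne'⟩ := hQc
    have : g = g' := s_two s hs hf1 hg hg' hgne hgne'
    subst this
    exact mlB S hvf s hs hf1 hg hgne hbc (hV.trans hperm3) hbg hcg hx hy he1f he1x he2f he2y
  -- FTT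
  · exact mlA S hvf s hbc hV hQb hQc hx hy he1f he1x he2f he2y
  -- FTF : f2 at a and c
  · push_neg at hQa hQc
    obtain ⟨g, hg, hag, hgne⟩ := hQa
    obtain ⟨g', hg', hcg, hgne'⟩ := hQc
    have : g = g' := s_two s hs hf1 hg hg' hgne hgne'
    subst this
    exact mlB S hvf s hs hf1 hg hgne hac (hV.trans hperm4) hag hcg hx hy he1f he1x he2f he2y
  -- FFT : f2 at a and b
  · push_neg at hQa hQb
    obtain ⟨g, hg, hag, hgne⟩ := hQa
    obtain ⟨g', hg', hbg, hgne'⟩ := hQb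
    have : g = g' := s_two s hs hf1 hg hg' hgne hgne'
    subst this
    exact mlB S hvf s hs hf1 hg hgne hab hV hag hbg hx hy he1f he1x he2f he2y
  -- FFF
  · push_neg at hQa hQb
    obtain ⟨g, hg, hag, hgne⟩ := hQa
    obtain ⟨g', hg', hbg, hgne'⟩ := hQb
    have : g = g' := s_two s hs hf1 hg hg' hgne hgne'
    subst this
    exact mlB S hvf s hs hf1 hg hgne hab hV hag hbg hx hy he1f he1x he2f he2y

end SSaux

namespace SSaux
variable (S : SimplicialSurface V E F)

/-- if `z ≠ f1` shares edge `e1` with `f1`, and `e` is the edge `{a,b}` of `f1`,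
with `e1 ≠ e`, then `z` touches the third vertex `c`. -/
lemma third_vertex_touch (hvf : S.VertexFaithful) {f1 z : F} {e e1 : E} {a b c : V}
    (hV : {v | S.vfinc v f1} = {a, b, c}) (hVab : {v | S.vinc v e} = {a, b})
    (he1f : S.einc e1 f1) (he1z : S.einc e1 z) (hne : e1 ≠ e) : S.vfinc c z := by
  obtain ⟨s1, t1, hst, hVe⟩ := edge_vertices S e1
  have hsubV : ({s1, t1} : Set V) ⊆ {a, b, c} := by
    rw [← hVe, ← hV]; exact edge_vsub_face S he1f
  have hvs1 : S.vinc s1 e1 := by rw [show S.vinc s1 e1 ↔ s1 ∈ {v | S.vinc v e1} from Iff.rfl, hVe]; simp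
  have hvt1 : S.vinc t1 e1 := by rw [show S.vinc t1 e1 ↔ t1 ∈ {v | S.vinc v e1} from Iff.rfl, hVe]; simp
  have hce : S.vinc c e1 := by
    by_contra hc
    have hs1 : s1 ≠ c := fun h => hc (h ▸ hvs1)
    have ht1 : t1 ≠ c := fun h => hc (h ▸ hvt1)
    have h1 := hsubV (show s1 ∈ ({s1, t1} : Set V) by simp)
    have h2 := hsubV (show t1 ∈ ({s1, t1} : Set V) by simp)
    simp only [Set.mem_insert_iff, Set.mem_singleton_iff] at h1 h2
    have hVeq : ({s1, t1} : Set V) = {a, b} := by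
      rcases h1 with rfl | rfl | rfl
      · rcases h2 with rfl | rfl | rfl
        · exact absurd rfl hst
        · rfl
        · exact absurd rfl ht1
      · rcases h2 with rfl | rfl | rfl
        · exact Set.pair_comm _ _
        · exact absurd rfl hst
        · exact absurd rfl ht1
      · exact absurd rfl hs1
    exact hne (hvf.1 e1 e (by rw [hVe, hVab, hVeq]))
  exact vfinc_of S hce he1z

/-- ml2 : `s` consists of two edge-adjacent faces; neighbours of either outside
`s` are all connected. -/
lemma ml2 [Finite F] (hvf : S.VertexFaithful) (s : Set F) {f1 f2 : F} {e : E}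
    (hseq : s = {f1, f2}) (hne : f1 ≠ f2) (he1 : S.einc e f1) (he2 : S.einc e f2)
    {x y : F} {e1 e2 : E} (hx : x ∉ s) (hy : y ∉ s)
    (he1f : S.einc e1 f1) (he1x : S.einc e1 x) (he2f : S.einc e2 f2) (he2y : S.einc e2 y) :
    (S.faceGraph.induce sᶜ).Reachable ⟨x, hx⟩ ⟨y, hy⟩ := by
  subst hseq
  have hfaces : {f' | S.einc e f'} = {f1, f2} := edge_faces_eq S he1 he2 hne
  obtain ⟨u1, u2, hu12, hVe⟩ := edge_vertices S e
  have hvu1 : S.vinc u1 e := by rw [show S.vinc u1 e ↔ u1 ∈ {v | S.vinc v e} from Iff.rfl, hVe]; simp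
  have hvu2 : S.vinc u2 e := by rw [show S.vinc u2 e ↔ u2 ∈ {v | S.vinc v e} from Iff.rfl, hVe]; simp
  have hu1f1 : S.vfinc u1 f1 := vfinc_of S hvu1 he1
  have hu2f1 : S.vfinc u2 f1 := vfinc_of S hvu2 he1
  have hu1f2 : S.vfinc u1 f2 := vfinc_of S hvu1 he2
  have hu2f2 : S.vfinc u2 f2 := vfinc_of S hvu2 he2
  obtain ⟨v3, hv3u1, hv3u2, hv3f1, hVf1⟩ := face_triple S hu1f1 hu2f1 hu12
  obtain ⟨w3, hw3u1, hw3u2, hw3f2, hVf2⟩ := face_triple S hu1f2 hu2f2 hu12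
  have hv3f2 : ¬ S.vfinc v3 f2 := by
    intro h
    apply hne
    apply face_eq_of_vsub S hvf
    rw [hVf1]
    rintro w (rfl | rfl | rfl)
    · exact hu1f2
    · exact hu2f2
    · exact h
  have hw3f1 : ¬ S.vfinc w3 f1 := by
    intro h
    apply hne.symm
    apply face_eq_of_vsub S hvf
    rw [hVf2]
    rintro w (rfl | rfl | rfl)
    · exact hu1f1
    · exact hu2f1
    · exact h
  -- x touches v3
  have he1ne : e1 ≠ e := by
    rintro rfl
    have : x ∈ ({f1, f2} : Set F) := hfaces ▸ he1x
    exact hx this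
  have hv3x : S.vfinc v3 x := third_vertex_touch S hvf hVf1 hVe he1f he1x he1ne
  have he2ne : e2 ≠ e := by
    rintro rfl
    have : y ∈ ({f1, f2} : Set F) := hfaces ▸ he2y
    exact hy this
  have hw3y : S.vfinc w3 y := third_vertex_touch S hvf hVf2 hVe he2f he2y he2ne
  -- the connecting faces p (at u1 and v3) and q (at u1 and w3)
  obtain ⟨e13, he13, hVe13⟩ := face_edge_exists S hvf hu1f1 hv3f1 (Ne.symm hv3u1)
  obtain ⟨p, hpne, hep, _⟩ := other_face S he13
  have hvu1e13 : S.vinc u1 e13 := by rw [show S.vinc u1 e13 ↔ u1 ∈ {v | S.vinc v e13} from Iff.rfl, hVe13]; simp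
  have hvv3e13 : S.vinc v3 e13 := by rw [show S.vinc v3 e13 ↔ v3 ∈ {v | S.vinc v e13} from Iff.rfl, hVe13]; simp
  have hu1p : S.vfinc u1 p := vfinc_of S hvu1e13 hep
  have hv3p : S.vfinc v3 p := vfinc_of S hvv3e13 hep
  have hps : p ∉ ({f1, f2} : Set F) := by
    rintro (rfl | rfl)
    · exact hpne rfl
    · exact hv3f2 hv3p
  obtain ⟨e23, he23, hVe23⟩ := face_edge_exists S hvf hu1f2 hw3f2 (Ne.symm hw3u1)
  obtain ⟨q, hqne, heq, _⟩ := other_face S he23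
  have hvu1e23 : S.vinc u1 e23 := by rw [show S.vinc u1 e23 ↔ u1 ∈ {v | S.vinc v e23} from Iff.rfl, hVe23]; simp
  have hvw3e23 : S.vinc w3 e23 := by rw [show S.vinc w3 e23 ↔ w3 ∈ {v | S.vinc v e23} from Iff.rfl, hVe23]; simp
  have hu1q : S.vfinc u1 q := vfinc_of S hvu1e23 heq
  have hw3q : S.vfinc w3 q := vfinc_of S hvw3e23 heq
  have hqs : q ∉ ({f1, f2} : Set F) := by
    rintro (rfl | rfl)
    · exact hw3f1 hw3q
    · exact hqne rfl
  -- three reachability pieces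
  have r1 : (S.faceGraph.induce ({f1, f2} : Set F)ᶜ).Reachable ⟨x, hx⟩ ⟨p, hps⟩ := by
    refine umb_conn_one S hvf v3 _ ?_ x p hv3x hv3p hx hps
    intro f f' h1 h2 h3 h4
    have e1 : f = f1 := by rcases h3 with rfl | rfl; rfl; exact absurd h1 hv3f2
    have e2 : f' = f1 := by rcases h4 with rfl | rfl; rfl; exact absurd h2 hv3f2
    rw [e1, e2]
  have r2 : (S.faceGraph.induce ({f1, f2} : Set F)ᶜ).Reachable ⟨p, hps⟩ ⟨q, hqs⟩ :=
    umb_conn_two S hvf u1 hne hvu1 he1 he2 p q hu1p hu1q hps hqs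
  have r3 : (S.faceGraph.induce ({f1, f2} : Set F)ᶜ).Reachable ⟨q, hqs⟩ ⟨y, hy⟩ := by
    refine umb_conn_one S hvf w3 _ ?_ q y hw3q hw3y hqs hy
    intro f f' h1 h2 h3 h4
    have e1 : f = f2 := by rcases h3 with rfl | rfl; exact absurd h1 hw3f1; rfl
    have e2 : f' = f2 := by rcases h4 with rfl | rfl; exact absurd h2 hw3f1; rfl
    rw [e1, e2]
  exact (r1.trans r2).trans r3

end SSaux

namespace SSaux
variable (S : SimplicialSurface V E F)

lemma walk_reach [Finite F] (hvf : S.VertexFaithful) (s : Set F) (hs : s.ncard ≤ 2) :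
    ∀ (L : ℕ) (a b : F) (w : S.faceGraph.Walk a b), w.length ≤ L →
    ∀ (ha : a ∉ s) (hb : b ∉ s),
      (S.faceGraph.induce sᶜ).Reachable ⟨a, ha⟩ ⟨b, hb⟩ := by
  intro L
  induction L with
  | zero =>
    intro a b w hlen ha hb
    cases w with
    | nil => exact SimpleGraph.Reachable.refl _
    | cons h w' => simp [SimpleGraph.Walk.length_cons] at hlen
  | succ L ih =>
    intro a b w hlen ha hb
    cases w with
    | nil => exact SimpleGraph.Reachable.refl _
    | @cons _ a' _ h w' =>
      rw [SimpleGraph.Walk.length_cons] at hlen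
      by_cases ha' : a' ∈ s
      · cases w' with
        | nil => exact absurd ha' hb
        | @cons _ a'' _ h2 w'' =>
          rw [SimpleGraph.Walk.length_cons] at hlen
          by_cases ha'' : a'' ∈ s
          · cases w'' with
            | nil => exact absurd ha'' hb
            | @cons _ a''' _ h3 w''' =>
              rw [SimpleGraph.Walk.length_cons] at hlen
              by_cases hshort : a' = a'''
              · subst hshort
                exact ih a b (SimpleGraph.Walk.cons h w''')
                  (by rw [SimpleGraph.Walk.length_cons]; omega) ha hb
              · by_cases ha''' : a''' ∈ s
                · exact absurd (s_two s hs ha' ha'' ha''' h2.ne' (fun hh => hshort hh.symm)) h3.ne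
                · -- s = {a', a''}, reroute via ml2
                  have hsub : ({a', a''} : Set F) ⊆ s := by rintro z (rfl | rfl) <;> assumption
                  have hseq : s = {a', a''} :=
                    (Set.eq_of_subset_of_ncard_le hsub
                      (le_trans hs (by rw [Set.ncard_pair h2.ne])) (Set.toFinite s)).symm
                  obtain ⟨_, e1, he1a, he1a'⟩ := shared_edge_of_adj S h
                  obtain ⟨_, em, hem1, hem2⟩ := shared_edge_of_adj S h2
                  obtain ⟨_, e2, he2a'', he2a'''⟩ := shared_edge_of_adj S h3
                  have r1 := ml2 S hvf s hseq h2.ne hem1 hem2 ha ha''' he1a' he1a he2a'' he2a'''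
                  exact r1.trans (ih a''' b w''' (by omega) ha''' hb)
          · -- one s-vertex between, reroute via ml
            obtain ⟨_, e1, he1a, he1a'⟩ := shared_edge_of_adj S h
            obtain ⟨_, e2, he2a', he2a''⟩ := shared_edge_of_adj S h2
            have r1 := ml S hvf s hs ha' ha ha'' he1a' he1a he2a' he2a''
            exact r1.trans (ih a'' b w'' (by omega) ha'' hb)
      · have hadj : (S.faceGraph.induce sᶜ).Adj ⟨a, ha⟩ ⟨a', ha'⟩ := by simpa using h
        exact hadj.reachable.trans (ih a' b w' (by omega) ha' hb)

lemma card_gt_three [Finite F] (hvf : S.VertexFaithful) (hconn : S.faceGraph.Connected) :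
    3 < Nat.card F := by
  have hne : Nonempty F := hconn.nonempty
  obtain ⟨f0⟩ := hne
  obtain ⟨e1, e2, e3, h12, h13, h23, hE⟩ := Set.ncard_eq_three.1 (S.face_three_edges f0)
  have hmem : ∀ e, S.einc e f0 ↔ e ∈ ({e1, e2, e3} : Set E) := fun e => by
    rw [show S.einc e f0 ↔ e ∈ {e | S.einc e f0} from Iff.rfl, hE]
  have he1 : S.einc e1 f0 := (hmem e1).2 (by simp)
  have he2 : S.einc e2 f0 := (hmem e2).2 (by simp)
  have he3 : S.einc e3 f0 := (hmem e3).2 (by simp)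
  obtain ⟨g1, hg1ne, hg1, _⟩ := other_face S he1
  obtain ⟨g2, hg2ne, hg2, _⟩ := other_face S he2
  obtain ⟨g3, hg3ne, hg3, _⟩ := other_face S he3
  by_contra hcard
  push_neg at hcard
  by_cases h : g1 = g2
  · exact two_edges S hvf h12 he1 (h ▸ hg1) he2 hg2 (Ne.symm hg2ne)
  by_cases h' : g1 = g3
  · exact two_edges S hvf h13 he1 (h' ▸ hg1) he3 hg3 (Ne.symm hg3ne)
  by_cases h'' : g2 = g3
  · exact two_edges S hvf h23 he2 (h'' ▸ hg2) he3 hg3 (Ne.symm hg3ne)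
  -- four distinct faces f0 g1 g2 g3
  have h4 : ({f0, g1, g2, g3} : Set F).ncard = 4 := by
    rw [Set.ncard_insert_of_notMem (by simp [Ne.symm hg1ne, Ne.symm hg2ne, Ne.symm hg3ne]) (Set.toFinite _),
        Set.ncard_insert_of_notMem (by simp [h, h']) (Set.toFinite _),
        Set.ncard_pair h'']
  have hle := Set.ncard_le_ncard (Set.subset_univ ({f0, g1, g2, g3} : Set F)) (Set.toFinite _)
  rw [Set.ncard_univ, h4] at hle
  omega

end SSaux


/-- The face graph of a connected vertex-faithful simplicial surface
is 3-connected: it has more than 3 nodes and deleting any at most 2 nodes leaves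
a connected graph. -/
theorem face_graph_three_connected (S : SimplicialSurface V E F) [Finite F]
    (hvf : S.VertexFaithful) (hconn : S.faceGraph.Connected) :
    3 < Nat.card F ∧
    ∀ s : Set F, s.ncard ≤ 2 → (S.faceGraph.induce sᶜ).Connected := by
  have hcard := SSaux.card_gt_three S hvf hconn
  refine ⟨hcard, fun s hs => ?_⟩
  rw [SimpleGraph.connected_iff]
  constructor
  · rintro ⟨a, ha⟩ ⟨b, hb⟩
    obtain ⟨w⟩ := hconn.preconnected a b
    exact SSaux.walk_reach S hvf s hs w.length a b w le_rfl ha hb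
  · -- nonempty
    by_contra hne
    rw [not_nonempty_iff] at hne
    have : sᶜ = ∅ := by
      ext z; simp only [Set.mem_empty_iff_false, iff_false]
      intro hz; exact hne.false ⟨z, hz⟩
    have hsu : s = Set.univ := by
      rw [← Set.compl_empty_iff, this]
    rw [hsu, Set.ncard_univ] at hs
    omega
end

section
/- For a vertex-faithful simplicial surface X, any two distinct cycles in the face graph F(X) corresponding to umbrellas of vertices of X intersect in either no arcs or exactly one arc. -/
variable {V E F : Type}

/-- For a vertex-faithful simplicial surface, the umbrella cycles of
two distinct vertices intersect in no arc or exactly one arc (the arcs of the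
umbrella cycle of `v` being the edges incident to `v`). -/
theorem umbrella_cycles_share_at_most_one_arc (S : SimplicialSurface V E F)
    (hvf : S.VertexFaithful) (v w : V) (hvw : v ≠ w) :
    {e | S.vinc v e ∧ S.vinc w e}.ncard ≤ 1 := by
  have key : ∀ e, S.vinc v e → S.vinc w e → {x | S.vinc x e} = {v, w} := by
    intro e hv hw
    have hfin : {x | S.vinc x e}.Finite := by
      by_contra h
      have := S.edge_two_vertices e
      rw [Set.Infinite.ncard (by simpa using h)] at this
      omega
    have hsub : ({v, w} : Set V) ⊆ {x | S.vinc x e} := by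
      intro x hx
      rcases hx with rfl | rfl <;> assumption
    have hc : ({v, w} : Set V).ncard = 2 := by
      rw [Set.ncard_pair hvw]
    symm
    apply Set.eq_of_subset_of_ncard_le hsub _ hfin
    rw [S.edge_two_vertices e, hc]
  have hsub : {e | S.vinc v e ∧ S.vinc w e}.Subsingleton := by
    intro e he e' he'
    exact hvf.1 e e' ((key e he.1 he.2).trans (key e' he'.1 he'.2).symm)
  rcases Set.eq_empty_or_nonempty {e | S.vinc v e ∧ S.vinc w e} with h | ⟨e, he⟩
  · simp [h]
  · have : {e' | S.vinc v e' ∧ S.vinc w e'} ⊆ {e} := fun x hx => hsub hx he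
    calc {e | S.vinc v e ∧ S.vinc w e}.ncard ≤ ({e} : Set E).ncard :=
          Set.ncard_le_ncard this (Set.finite_singleton e)
      _ = 1 := Set.ncard_singleton e
end

section
/- In a vertex-faithful simplicial surface X, every cycle of the face graph F(X) corresponding to the umbrella of a vertex is chordless: no two nodes of the cycle are joined by an arc of F(X) not belonging to the cycle. -/
variable {V E F : Type}

/-- In a vertex-faithful simplicial surface, every umbrella cycle is
chordless: any arc of the face graph joining two distinct nodes (faces) of the
umbrella cycle of `v` must itself belong to the cycle, i.e. be incident to `v`. -/
theorem umbrella_cycles_chordless (S : SimplicialSurface V E F)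
    (hvf : S.VertexFaithful) (v : V) (e : E) (f g : F) (hfg : f ≠ g)
    (hef : S.einc e f) (heg : S.einc e g)
    (hvfin : S.vfinc v f) (hvg : S.vfinc v g) :
    S.vinc v e := by
  by_contra hve
  obtain ⟨a, b, hab, hset⟩ := Set.ncard_eq_two.mp (S.edge_two_vertices e)
  have ha : S.vinc a e := by rw [show S.vinc a e ↔ a ∈ {v | S.vinc v e} from Iff.rfl, hset]; simp
  have hb : S.vinc b e := by rw [show S.vinc b e ↔ b ∈ {v | S.vinc v e} from Iff.rfl, hset]; simp
  have hva : v ≠ a := fun h => hve (h ▸ ha)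
  have hvb : v ≠ b := fun h => hve (h ▸ hb)
  have hcard : ({v, a, b} : Set V).ncard = 3 := by
    rw [Set.ncard_insert_of_notMem (by simp [hva, hvb]) (Set.toFinite _),
        Set.ncard_pair hab]
  have key : ∀ h : F, S.einc e h → S.vfinc v h → {w | S.vfinc w h} = {v, a, b} := by
    intro h heh hvh
    have hsub : ({v, a, b} : Set V) ⊆ {w | S.vfinc w h} := by
      intro w hw
      simp only [Set.mem_insert_iff, Set.mem_singleton_iff] at hw
      rcases hw with rfl | rfl | rfl
      · exact hvh
      · exact (S.vfinc_iff _ h).mpr ⟨e, ha, heh⟩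
      · exact (S.vfinc_iff _ h).mpr ⟨e, hb, heh⟩
    have hfin : {w | S.vfinc w h}.Finite := by
      by_contra hinf
      have := Set.Infinite.ncard hinf
      rw [S.face_three_vertices h] at this
      omega
    exact ((Set.eq_of_subset_of_ncard_le hsub
      (by rw [S.face_three_vertices h, hcard]) hfin).symm)
  exact hfg (hvf.2 f g (by rw [key f hef hvfin, key g heg hvg]))
end

section
/- In a vertex-faithful connected simplicial surface X, every cycle of the face graph F(X) corresponding to the umbrella of a vertex is non-separating: deleting the nodes of such a cycle from F(X) leaves a connected graph. -/
variable {V E F : Type}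

private lemma aux_finite_of_ncard {α : Type*} {s : Set α} {k : ℕ} (hk : k ≠ 0)
    (h : s.ncard = k) : s.Finite := by
  by_contra hinf
  rw [Set.Infinite.ncard (by simpa using hinf)] at h
  exact hk h.symm

private lemma aux_pair_eq {α : Type*} {s : Set α} {x y : α} (h : s.ncard = 2)
    (hx : x ∈ s) (hy : y ∈ s) (hxy : x ≠ y) : s = {x, y} := by
  refine (Set.eq_of_subset_of_ncard_le ?_ ?_ (aux_finite_of_ncard two_ne_zero h)).symm
  · rintro w hw
    simp only [Set.mem_insert_iff, Set.mem_singleton_iff] at hw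
    rcases hw with rfl | rfl <;> assumption
  · rw [h, Set.ncard_pair hxy]

private lemma aux_triple_eq {α : Type*} {s : Set α} {x y z : α} (h : s.ncard = 3)
    (hx : x ∈ s) (hy : y ∈ s) (hz : z ∈ s) (d1 : x ≠ y) (d2 : x ≠ z) (d3 : y ≠ z) :
    s = {x, y, z} := by
  refine (Set.eq_of_subset_of_ncard_le ?_ ?_ (aux_finite_of_ncard three_ne_zero h)).symm
  · rintro w hw
    simp only [Set.mem_insert_iff, Set.mem_singleton_iff] at hw
    rcases hw with rfl | rfl | rfl <;> assumption
  · rw [h, Set.ncard_eq_three.mpr ⟨x, y, z, d1, d2, d3, rfl⟩]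

/-- In a connected vertex-faithful simplicial surface, every umbrella
cycle is non-separating: deleting its nodes (the faces incident to `v`) from the
face graph leaves a connected graph. -/
theorem umbrella_cycles_nonseparating (S : SimplicialSurface V E F)
    (hvf : S.VertexFaithful) (hconn : S.faceGraph.Connected) (v : V) :
    (S.faceGraph.induce {f | ¬ S.vfinc v f}).Connected := by
  classical
  obtain ⟨n, hn2, fa, ed, hfa, hed, hFa, hEd, hinc⟩ := S.umbrella v
  haveI : NeZero n := ⟨by omega⟩
  have hone : (1 : ZMod n) ≠ 0 := by
    haveI : Fact (1 < n) := ⟨hn2⟩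
    exact one_ne_zero
  have hsucc : ∀ i : ZMod n, i + 1 ≠ i := by
    intro i h
    exact hone (add_left_cancel (h.trans (add_zero i).symm))
  have hcastvaln : ∀ a : ZMod n, ((a.val : ℕ) : ZMod n) = a := fun a =>
    ZMod.natCast_rightInverse a
  have hvinc : ∀ i, S.vinc v (ed i) := fun i => (hEd (ed i)).mpr ⟨i, rfl⟩
  have hfav : ∀ i, S.vfinc v (fa i) := fun i => (hFa (fa i)).mpr ⟨i, rfl⟩
  -- the second vertex `b i` of the edge `ed i`
  have hbex : ∀ i, ∃ w, w ≠ v ∧ {u | S.vinc u (ed i)} = {v, w} := by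
    intro i
    obtain ⟨a, c, hac, hset⟩ := Set.ncard_eq_two.mp (S.edge_two_vertices (ed i))
    have hv : v ∈ ({a, c} : Set V) := hset ▸ hvinc i
    simp only [Set.mem_insert_iff, Set.mem_singleton_iff] at hv
    rcases hv with rfl | rfl
    · exact ⟨c, fun h => hac h.symm, hset⟩
    · exact ⟨a, hac, by rw [hset, Set.pair_comm]⟩
  choose b hbv hbset using hbex
  have hbinc : ∀ i, S.vinc (b i) (ed i) := by
    intro i
    have : b i ∈ {u | S.vinc u (ed i)} := by
      rw [hbset i]; exact Set.mem_insert_iff.mpr (Or.inr rfl)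
    exact this
  have hbinj : Function.Injective b := by
    intro i j hij
    exact hed (hvf.1 _ _ (by rw [hbset i, hbset j, hij]))
  have hbd : ∀ i : ZMod n, b (i - 1) ≠ b i := by
    intro i h
    have h' : i - 1 = i := hbinj h
    exact hsucc i (by linear_combination -h')
  -- vertex set of each umbrella face
  have hfaV : ∀ i, {u | S.vfinc u (fa i)} = {v, b (i - 1), b i} := by
    intro i
    have h1 : S.vfinc (b (i - 1)) (fa i) := by
      refine (S.vfinc_iff _ _).mpr ⟨ed (i - 1), hbinc _, ?_⟩
      have := (hinc (i - 1)).2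
      rwa [sub_add_cancel] at this
    have h2 : S.vfinc (b i) (fa i) := (S.vfinc_iff _ _).mpr ⟨ed i, hbinc i, (hinc i).1⟩
    exact aux_triple_eq (S.face_three_vertices (fa i)) (hfav i) h1 h2
      (Ne.symm (hbv _)) (Ne.symm (hbv _)) (hbd i)
  -- the edge of `fa i` opposite to `v`
  have hellex : ∀ i, ∃ e, S.einc e (fa i) ∧ ¬ S.vinc v e := by
    intro i
    by_contra h
    push_neg at h
    have hsub : {e | S.einc e (fa i)} ⊆ {e | S.einc e (fa i) ∧ S.vinc v e} :=
      fun e he => ⟨he, h e he⟩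
    have hfin := aux_finite_of_ncard two_ne_zero (S.face_vertex_two_edges _ v (hfav i))
    have := Set.ncard_le_ncard hsub hfin
    rw [S.face_three_edges, S.face_vertex_two_edges _ v (hfav i)] at this
    omega
  choose ℓ hell hellv using hellex
  have hellset : ∀ i e, S.einc e (fa i) → ¬ S.vinc v e →
      {u | S.vinc u e} = {b (i - 1), b i} := by
    intro i e he hv'
    refine Set.eq_of_subset_of_ncard_le ?_ ?_ (Set.toFinite _)
    · intro u hu
      have hu' : u ∈ {u | S.vfinc u (fa i)} := (S.vfinc_iff _ _).mpr ⟨e, hu, he⟩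
      rw [hfaV i] at hu'
      simp only [Set.mem_insert_iff, Set.mem_singleton_iff] at hu' ⊢
      rcases hu' with rfl | h | h
      · exact absurd hu hv'
      · exact Or.inl h
      · exact Or.inr h
    · rw [S.edge_two_vertices, Set.ncard_pair (hbd i)]
  have helluniq : ∀ i e, S.einc e (fa i) → ¬ S.vinc v e → e = ℓ i := fun i e he hv' =>
    hvf.1 _ _ ((hellset i e he hv').trans (hellset i (ℓ i) (hell i) (hellv i)).symm)
  have hellvset : ∀ i, {u | S.vinc u (ℓ i)} = {b (i - 1), b i} := fun i =>
    hellset i _ (hell i) (hellv i)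
  -- the face on the other side of `ℓ i`
  have hgex : ∀ i, ∃ gi, S.einc (ℓ i) gi ∧ gi ≠ fa i ∧
      {f | S.einc (ℓ i) f} = {fa i, gi} := by
    intro i
    obtain ⟨a, c, hac, hset⟩ := Set.ncard_eq_two.mp (S.edge_two_faces (ℓ i))
    have hv : fa i ∈ ({a, c} : Set F) := hset ▸ hell i
    simp only [Set.mem_insert_iff, Set.mem_singleton_iff] at hv
    rcases hv with rfl | rfl
    · refine ⟨c, ?_, fun h => hac h.symm, hset⟩
      have : c ∈ {f | S.einc (ℓ i) f} := by
        rw [hset]; exact Set.mem_insert_iff.mpr (Or.inr rfl)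
      exact this
    · refine ⟨a, ?_, hac, by rw [hset, Set.pair_comm]⟩
      have : a ∈ {f | S.einc (ℓ i) f} := by
        rw [hset]; exact Set.mem_insert_iff.mpr (Or.inl rfl)
      exact this
  choose g hg1 hg2 hgset using hgex
  have hgU : ∀ i, ¬ S.vfinc v (g i) := by
    intro i hvg
    obtain ⟨j, hj⟩ := (hFa _).1 hvg
    have he : S.einc (ℓ i) (fa j) := by rw [hj]; exact hg1 i
    have hll : ℓ i = ℓ j := helluniq j _ he (hellv i)
    have hvs : ({b (i - 1), b i} : Set V) = {b (j - 1), b j} := by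
      rw [← hellvset i, hll, hellvset j]
    have hij : fa i = fa j := hvf.2 _ _ (by rw [hfaV i, hfaV j, hvs])
    exact hg2 i (by rw [← hj, ← hij])
  -- the only neighbour of `fa i` outside the umbrella is `g i`
  have hN : ∀ (i) (f' : F), ¬ S.vfinc v f' → S.faceGraph.Adj (fa i) f' → f' = g i := by
    intro i f' hf' hadj
    rw [SimplicialSurface.faceGraph, SimpleGraph.fromRel_adj] at hadj
    obtain ⟨hne, h⟩ := hadj
    have he : ∃ e, S.einc e (fa i) ∧ S.einc e f' := by
      rcases h with ⟨e, h1, h2⟩ | ⟨e, h1, h2⟩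
      exacts [⟨e, h1, h2⟩, ⟨e, h2, h1⟩]
    obtain ⟨e, he1, he2⟩ := he
    have hnv : ¬ S.vinc v e := fun hv' => hf' ((S.vfinc_iff _ _).mpr ⟨e, hv', he2⟩)
    have hel : e = ℓ i := helluniq i e he1 hnv
    have hmem : f' ∈ {f | S.einc (ℓ i) f} := by rw [← hel]; exact he2
    rw [hgset i] at hmem
    simp only [Set.mem_insert_iff, Set.mem_singleton_iff] at hmem
    rcases hmem with rfl | rfl
    · exact absurd rfl hne
    · rfl
  -- Lemma B: consecutive outer faces are reachable in the induced graph
  have hB : ∀ i : ZMod n,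
      (S.faceGraph.induce {f | ¬ S.vfinc v f}).Reachable ⟨g i, hgU i⟩ ⟨g (i+1), hgU (i+1)⟩ := by
    intro i
    have hbl : S.vinc (b i) (ℓ i) := by
      have : b i ∈ {u | S.vinc u (ℓ i)} := by
        rw [hellvset i]; exact Set.mem_insert_iff.mpr (Or.inr rfl)
      exact this
    have hbl1 : S.vinc (b i) (ℓ (i+1)) := by
      have : b i ∈ {u | S.vinc u (ℓ (i+1))} := by
        rw [hellvset (i+1), add_sub_cancel_right]
        exact Set.mem_insert_iff.mpr (Or.inl rfl)
      exact this
    have hwgi : S.vfinc (b i) (g i) := (S.vfinc_iff _ _).mpr ⟨ℓ i, hbl, hg1 i⟩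
    have hwgi1 : S.vfinc (b i) (g (i+1)) := (S.vfinc_iff _ _).mpr ⟨ℓ (i+1), hbl1, hg1 (i+1)⟩
    obtain ⟨m, hm2, fa', ed', hfa', hed', hFa', hEd', hinc'⟩ := S.umbrella (b i)
    haveI : NeZero m := ⟨by omega⟩
    have hone' : (1 : ZMod m) ≠ 0 := by
      haveI : Fact (1 < m) := ⟨hm2⟩
      exact one_ne_zero
    have hsucc' : ∀ t : ZMod m, t + 1 ≠ t := by
      intro t h
      exact hone' (add_left_cancel (h.trans (add_zero t).symm))
    have hcastval : ∀ a : ZMod m, ((a.val : ℕ) : ZMod m) = a := fun a =>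
      ZMod.natCast_rightInverse a
    have hcastzero : ∀ j : ℕ, 0 < j → j < m → ((j : ZMod m) ≠ 0) := by
      intro j hj1 hj2 h
      have hd := (ZMod.natCast_eq_zero_iff j m).1 h
      have := Nat.le_of_dvd hj1 hd
      omega
    have haddne : ∀ (t : ZMod m) (j : ℕ), 0 < j → j < m → t + (j : ZMod m) ≠ t := by
      intro t j h1 h2 h
      exact hcastzero j h1 h2 (add_left_cancel (h.trans (add_zero t).symm))
    obtain ⟨k, hk⟩ := (hEd' (ed i)).1 (hbinc i)
    have hfd : fa i ≠ fa (i+1) := fun h => hsucc i (hfa h).symm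
    have hfaces : {f | S.einc (ed i) f} = {fa i, fa (i+1)} :=
      aux_pair_eq (S.edge_two_faces _) (hinc i).1 (hinc i).2 hfd
    have hk0 : fa' k = fa i ∨ fa' k = fa (i+1) := by
      have hmem : fa' k ∈ {f | S.einc (ed i) f} := by rw [← hk]; exact (hinc' k).1
      rw [hfaces] at hmem
      simpa using hmem
    have hk1 : fa' (k+1) = fa i ∨ fa' (k+1) = fa (i+1) := by
      have hmem : fa' (k+1) ∈ {f | S.einc (ed i) f} := by rw [← hk]; exact (hinc' k).2
      rw [hfaces] at hmem
      simpa using hmem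
    have hkd : fa' k ≠ fa' (k+1) := fun h => hsucc' k (hfa' h).symm
    have hC1 : ∀ f, S.vfinc v f → S.vfinc (b i) f → f = fa i ∨ f = fa (i+1) := by
      intro f hv' hw'
      obtain ⟨j, rfl⟩ := (hFa f).1 hv'
      have hmem : b i ∈ {u | S.vfinc u (fa j)} := hw'
      rw [hfaV j] at hmem
      simp only [Set.mem_insert_iff, Set.mem_singleton_iff] at hmem
      rcases hmem with h | h | h
      · exact absurd h (hbv i)
      · right
        have : i = j - 1 := hbinj h
        rw [show j = i + 1 by rw [this]; ring]
      · left
        rw [hbinj h]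
    have hC2 : ∀ t : ZMod m, t ≠ k → t ≠ k + 1 → ¬ S.vfinc v (fa' t) := by
      intro t h1 h2 hv'
      have hw' : S.vfinc (b i) (fa' t) := (hFa' _).2 ⟨t, rfl⟩
      rcases hC1 _ hv' hw' with h | h
      · rcases hk0 with h0 | h0
        · exact h1 (hfa' (h.trans h0.symm))
        · rcases hk1 with h1' | h1'
          · exact h2 (hfa' (h.trans h1'.symm))
          · exact hkd (h0.trans h1'.symm)
      · rcases hk0 with h0 | h0
        · rcases hk1 with h1' | h1'
          · exact hkd (h0.trans h1'.symm)
          · exact h2 (hfa' (h.trans h1'.symm))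
        · exact h1 (hfa' (h.trans h0.symm))
    obtain ⟨r, hr⟩ := (hFa' (g i)).1 hwgi
    obtain ⟨s', hs'⟩ := (hFa' (g (i+1))).1 hwgi1
    have hrk : r ≠ k ∧ r ≠ k + 1 := by
      constructor <;> intro h <;> subst h
      · rcases hk0 with h | h <;> exact hgU i (by rw [← hr, h]; exact hfav _)
      · rcases hk1 with h | h <;> exact hgU i (by rw [← hr, h]; exact hfav _)
    have hsk : s' ≠ k ∧ s' ≠ k + 1 := by
      constructor <;> intro h <;> subst h
      · rcases hk0 with h | h <;> exact hgU (i+1) (by rw [← hs', h]; exact hfav _)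
      · rcases hk1 with h | h <;> exact hgU (i+1) (by rw [← hs', h]; exact hfav _)
    have hm3 : 3 ≤ m := by
      by_contra hlt
      have hm2' : m = 2 := by omega
      subst hm2'
      have hvlt := ZMod.val_lt (r - k)
      have hv2 : (r - k).val = 0 ∨ (r - k).val = 1 := by omega
      rcases hv2 with h2 | h2
      · exact hrk.1 (sub_eq_zero.mp ((ZMod.val_eq_zero _).1 h2))
      · have : ((1 : ℕ) : ZMod 2) = r - k := by rw [← h2, hcastval]
        have : r = k + 1 := by
          rw [eq_comm, sub_eq_iff_eq_add] at this
          rw [this]; push_cast; ring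
        exact hrk.2 this
    -- base node of the detour path
    have hbase : ¬ S.vfinc v (fa' (k + 1 + ((1 : ℕ) : ZMod m))) := by
      apply hC2
      · intro h
        have h' : k + ((2 : ℕ) : ZMod m) = k := by
          push_cast at h ⊢; linear_combination h
        exact haddne k 2 (by omega) (by omega) h'
      · intro h
        have h' : (k + 1) + ((1 : ℕ) : ZMod m) = k + 1 := h
        exact haddne (k+1) 1 (by omega) (by omega) h'
    have hpath : ∀ j : ℕ, 1 ≤ j → j ≤ m - 2 →
        ∃ h1 : ¬ S.vfinc v (fa' (k + 1 + (j : ZMod m))),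
          (S.faceGraph.induce {f | ¬ S.vfinc v f}).Reachable
            ⟨fa' (k + 1 + ((1 : ℕ) : ZMod m)), hbase⟩ ⟨fa' (k + 1 + (j : ZMod m)), h1⟩ := by
      intro j
      induction j with
      | zero => omega
      | succ p ih =>
        intro _ h2
        by_cases hp : p = 0
        · subst hp
          exact ⟨hbase, SimpleGraph.Reachable.refl _⟩
        · obtain ⟨hp1, hrp⟩ := ih (by omega) (by omega)
          have hnew : ¬ S.vfinc v (fa' (k + 1 + ((p + 1 : ℕ) : ZMod m))) := by
            apply hC2
            · intro h
              have h' : k + ((p + 2 : ℕ) : ZMod m) = k := by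
                push_cast at h ⊢; linear_combination h
              exact haddne k (p+2) (by omega) (by omega) h'
            · intro h
              have h' : (k + 1) + ((p + 1 : ℕ) : ZMod m) = k + 1 := h
              exact haddne (k+1) (p+1) (by omega) (by omega) h'
          refine ⟨hnew, hrp.trans (SimpleGraph.Adj.reachable ?_)⟩
          show S.faceGraph.Adj (fa' (k + 1 + (p : ZMod m))) (fa' (k + 1 + ((p + 1 : ℕ) : ZMod m)))
          have hxy : (k + 1 + ((p + 1 : ℕ) : ZMod m)) = (k + 1 + (p : ZMod m)) + 1 := by
            push_cast; ring
          rw [hxy, SimplicialSurface.faceGraph, SimpleGraph.fromRel_adj]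
          exact ⟨fun h => hsucc' _ (hfa' h).symm,
            Or.inl ⟨ed' (k + 1 + (p : ZMod m)), (hinc' _).1, (hinc' _).2⟩⟩
    -- write r and s' in the form k + 1 + j
    have hdist : ∀ t : ZMod m, t ≠ k → t ≠ k + 1 →
        1 ≤ (t - (k+1)).val ∧ (t - (k+1)).val ≤ m - 2 ∧ k + 1 + (((t - (k+1)).val : ℕ) : ZMod m) = t := by
      intro t h1 h2
      have hne0 : t - (k+1) ≠ 0 := sub_ne_zero.mpr h2
      have hv1 : 1 ≤ (t - (k+1)).val := by
        rcases Nat.eq_zero_or_pos (t - (k+1)).val with h | h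
        · exact absurd ((ZMod.val_eq_zero _).1 h) hne0
        · exact h
      have hvlt := ZMod.val_lt (t - (k+1))
      have hv2 : (t - (k+1)).val ≤ m - 2 := by
        by_contra hgt
        have hval : (t - (k+1)).val = m - 1 := by omega
        have he : t - (k+1) = ((m - 1 : ℕ) : ZMod m) := by rw [← hval, hcastval]
        have hm1 : ((m - 1 : ℕ) : ZMod m) = -1 := by
          have h0 : ((m : ℕ) : ZMod m) = 0 := ZMod.natCast_self m
          rw [Nat.cast_sub (by omega : 1 ≤ m), h0, Nat.cast_one]
          ring
        rw [hm1] at he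
        have : t = k := by
          have := sub_eq_iff_eq_add.mp he
          rw [this]; ring
        exact h1 this
      exact ⟨hv1, hv2, by rw [hcastval]; ring⟩
    obtain ⟨hr1, hr2, hr3⟩ := hdist r hrk.1 hrk.2
    obtain ⟨hs1, hs2, hs3⟩ := hdist s' hsk.1 hsk.2
    obtain ⟨hA, hRA⟩ := hpath _ hr1 hr2
    obtain ⟨hBm, hRB⟩ := hpath _ hs1 hs2
    have e1 : (⟨fa' (k + 1 + (((r - (k+1)).val : ℕ) : ZMod m)), hA⟩ :
        {f | ¬ S.vfinc v f}) = ⟨g i, hgU i⟩ :=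
      Subtype.ext (show fa' (k + 1 + (((r - (k+1)).val : ℕ) : ZMod m)) = g i by rw [hr3, hr])
    have e2 : (⟨fa' (k + 1 + (((s' - (k+1)).val : ℕ) : ZMod m)), hBm⟩ :
        {f | ¬ S.vfinc v f}) = ⟨g (i+1), hgU (i+1)⟩ :=
      Subtype.ext (show fa' (k + 1 + (((s' - (k+1)).val : ℕ) : ZMod m)) = g (i+1) by rw [hs3, hs'])
    rw [e1] at hRA
    rw [e2] at hRB
    exact hRA.symm.trans hRB
  -- all outer faces are mutually reachable
  have hBn : ∀ (i : ZMod n) (t : ℕ),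
      (S.faceGraph.induce {f | ¬ S.vfinc v f}).Reachable
        ⟨g i, hgU i⟩ ⟨g (i + (t : ZMod n)), hgU _⟩ := by
    intro i t
    induction t with
    | zero =>
      have h0 : i + ((0 : ℕ) : ZMod n) = i := by push_cast; ring
      rw [show (⟨g (i + ((0 : ℕ) : ZMod n)), hgU _⟩ : {f | ¬ S.vfinc v f}) = ⟨g i, hgU i⟩ from
        Subtype.ext (by rw [h0])]
    | succ p ih =>
      have hcast : i + ((p + 1 : ℕ) : ZMod n) = (i + (p : ZMod n)) + 1 := by push_cast; ring
      rw [show (⟨g (i + ((p + 1 : ℕ) : ZMod n)), hgU _⟩ : {f | ¬ S.vfinc v f})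
          = ⟨g ((i + (p : ZMod n)) + 1), hgU _⟩ from Subtype.ext (by rw [hcast])]
      exact ih.trans (hB (i + (p : ZMod n)))
  have hBall : ∀ i j : ZMod n,
      (S.faceGraph.induce {f | ¬ S.vfinc v f}).Reachable ⟨g i, hgU i⟩ ⟨g j, hgU j⟩ := by
    intro i j
    have := hBn i ((j - i).val)
    rwa [show (⟨g (i + (((j - i).val : ℕ) : ZMod n)), hgU _⟩ : {f | ¬ S.vfinc v f})
        = ⟨g j, hgU j⟩ from Subtype.ext (by rw [hcastvaln]; ring_nf)] at this
  -- main walk induction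
  have key : ∀ (x y : F) (w : S.faceGraph.Walk x y) (hy : ¬ S.vfinc v y),
      (∀ hx : ¬ S.vfinc v x,
        (S.faceGraph.induce {f | ¬ S.vfinc v f}).Reachable ⟨x, hx⟩ ⟨y, hy⟩) ∧
      (∀ i, x = fa i →
        (S.faceGraph.induce {f | ¬ S.vfinc v f}).Reachable ⟨g i, hgU i⟩ ⟨y, hy⟩) := by
    intro x y w
    induction w with
    | nil =>
      intro hy
      refine ⟨fun hx => SimpleGraph.Reachable.refl _, fun i hi => ?_⟩
      exact absurd (hi ▸ hfav i) hy
    | @cons x' v' y' hadj p ih =>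
      intro hy
      constructor
      · intro hx
        by_cases hv' : S.vfinc v v'
        · obtain ⟨j, hj⟩ := (hFa _).1 hv'
          have hxg : x' = g j := hN j x' hx (by rw [hj]; exact hadj.symm)
          have hrest := (ih hy).2 j hj.symm
          rw [show (⟨x', hx⟩ : {f | ¬ S.vfinc v f}) = ⟨g j, hgU j⟩ from Subtype.ext hxg]
          exact hrest
        · have h1 : (S.faceGraph.induce {f | ¬ S.vfinc v f}).Adj ⟨x', hx⟩ ⟨v', hv'⟩ := hadj
          exact h1.reachable.trans ((ih hy).1 hv')
      · intro i hi
        by_cases hv' : S.vfinc v v'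
        · obtain ⟨j, hj⟩ := (hFa _).1 hv'
          exact (hBall i j).trans ((ih hy).2 j hj.symm)
        · have hvg : v' = g i := hN i v' hv' (by rw [← hi]; exact hadj)
          have hrest := (ih hy).1 hv'
          rw [show (⟨g i, hgU i⟩ : {f | ¬ S.vfinc v f}) = ⟨v', hv'⟩ from
            Subtype.ext hvg.symm]
          exact hrest
  haveI : Nonempty {f | ¬ S.vfinc v f} := ⟨⟨g 0, hgU 0⟩⟩
  refine ⟨?_⟩
  rintro ⟨x, hx⟩ ⟨y, hy⟩
  obtain ⟨w⟩ := hconn.preconnected x y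
  exact (key x y w hy).1 hx
end

section
/- If a vertex-faithful simplicial surface X has a separating n-waist (n ≥ 3), then the face graph F(X) is not cyclically (n+1)-arc connected: there is a set of n arcs whose removal disconnects F(X) into at least two components each containing a cycle. -/
variable {V E F : Type}

/-- A closed vertex-edge path of length `n`: distinct vertices `w i`, distinct
edges `we i`, where `we i` joins `w i` and `w (i+1)`. -/
def SimplicialSurface.IsClosedPath (S : SimplicialSurface V E F) {n : ℕ}
    (w : ZMod n → V) (we : ZMod n → E) : Prop :=
  Function.Injective w ∧ Function.Injective we ∧
  ∀ i, S.vinc (w i) (we i) ∧ S.vinc (w (i + 1)) (we i)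

/-- An `n`-waist: for `n = 3`, a closed vertex-edge path of length 3 no two of
whose edges are incident to a common face; for `n ≥ 4`, a closed
distance-faithful vertex-edge path of length `n` in a surface with no 3-waist. -/
def SimplicialSurface.IsWaist (S : SimplicialSurface V E F) (n : ℕ)
    (w : ZMod n → V) (we : ZMod n → E) : Prop :=
  S.IsClosedPath w we ∧
  ((n = 3 ∧ ∀ i j, i ≠ j → ∀ f, ¬(S.einc (we i) f ∧ S.einc (we j) f)) ∨
   (4 ≤ n ∧
     (¬ ∃ (w3 : ZMod 3 → V) (we3 : ZMod 3 → E), S.IsClosedPath w3 we3 ∧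
        ∀ i j, i ≠ j → ∀ f, ¬(S.einc (we3 i) f ∧ S.einc (we3 j) f)) ∧
     (∀ i j, S.edgeGraph.dist (w i) (w j) = min (i - j).val ((j - i).val))))

/-- The face graph with the arcs in `A` deleted. -/
def SimplicialSurface.cutGraph (S : SimplicialSurface V E F) (A : Set E) : SimpleGraph F :=
  SimpleGraph.fromRel (fun f g => ∃ e, e ∉ A ∧ S.einc e f ∧ S.einc e g)

/-- A waist is separating if cutting the surface along its edges (i.e. deleting
the corresponding arcs of the face graph) yields exactly two connected components. -/
def SimplicialSurface.IsSeparatingWaist (S : SimplicialSurface V E F) (n : ℕ)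
    (w : ZMod n → V) (we : ZMod n → E) : Prop :=
  S.IsWaist n w we ∧ ∃ s : Set F, s.Nonempty ∧ sᶜ.Nonempty ∧
    (∀ a b, (S.cutGraph (Set.range we)).Adj a b → (a ∈ s ↔ b ∈ s)) ∧
    ((S.cutGraph (Set.range we)).induce s).Connected ∧
    ((S.cutGraph (Set.range we)).induce sᶜ).Connected

/-- The connected component of `a` in `G` contains a cycle. -/
def SimpleGraph.CompHasCycle {α : Type} (G : SimpleGraph α) (a : α) : Prop :=
  ∃ (b : α) (p : G.Walk b b), p.IsCycle ∧ G.Reachable a b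

/-- The face graph of `S` is cyclically `k`-arc connected: no set of at most
`k - 1` arcs disconnects it into at least two components each containing a cycle. -/
def SimplicialSurface.CyclicallyArcConnected (S : SimplicialSurface V E F) (k : ℕ) : Prop :=
  ¬ ∃ A : Set E, A.ncard ≤ k - 1 ∧ ∃ f g : F,
    ¬ (S.cutGraph A).Reachable f g ∧
    (S.cutGraph A).CompHasCycle f ∧ (S.cutGraph A).CompHasCycle g

/-!
Cut the surface along the `n` waist edges. The two sides of a separating waist are
unions of components of the cut face graph, so it only remains to find a cycle in the
component of every face. Every face has a vertex off the waist: the vertices of a face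
are pairwise joined by edges, so three waist vertices spanning a face would be pairwise
consecutive on the waist (by distance-faithfulness when `n ≥ 4`), which is impossible
when `n ≥ 4` and, when `n = 3`, puts two waist edges into one face. No edge at that
vertex is cut, so its umbrella survives as a cycle; the umbrella has length at least
three because in a vertex-faithful surface two faces share at most one edge.
-/

open Function

lemma Set.eq_pair_of_ncard_eq_two {α : Type*} {s : Set α} {a b : α} (hs : s.ncard = 2)
    (ha : a ∈ s) (hb : b ∈ s) (hab : a ≠ b) : s = {a, b} :=
  (Set.eq_of_subset_of_ncard_le (Set.insert_subset ha (Set.singleton_subset_iff.mpr hb))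
    (by rw [hs, Set.ncard_pair hab]) (Set.finite_of_ncard_ne_zero (by omega))).symm

namespace ZMod

variable {n : ℕ}

lemma sub_eq_one_or_neg_one_of_min_val_eq_one [NeZero n] {i j : ZMod n}
    (h : min (i - j).val (j - i).val = 1) : i - j = 1 ∨ i - j = -1 := by
  rcases min_choice (i - j).val (j - i).val with h' | h' <;> rw [h'] at h
  · left
    rw [← natCast_zmod_val (i - j), h, Nat.cast_one]
  · right
    rw [← neg_sub, ← natCast_zmod_val (j - i), h, Nat.cast_one]

lemma sub_eq_one_or_neg_one_of_ne_three :
    ∀ {i j : ZMod 3}, i ≠ j → i - j = 1 ∨ i - j = -1 := by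
  decide

lemma not_triangle (hn : 4 ≤ n) {a b c : ZMod n} (hab : a - b = 1 ∨ a - b = -1)
    (hbc : b - c = 1 ∨ b - c = -1) (hac : a - c = 1 ∨ a - c = -1) : False := by
  have h1 : (1 : ZMod n) ≠ 0 := by
    have := nontrivial_iff.mpr (by omega : n ≠ 1)
    exact one_ne_zero
  have h3 : (3 : ZMod n) ≠ 0 := fun h3 ↦ by
    have := Nat.le_of_dvd (by norm_num) ((natCast_eq_zero_iff 3 n).mp (by exact_mod_cast h3))
    omega
  have hsum : (a - b) + (b - c) - (a - c) = 0 := by ring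
  rcases hab with h | h <;> rcases hbc with h' | h' <;> rcases hac with h'' | h'' <;>
    rw [h, h', h''] at hsum <;> norm_num at hsum <;> contradiction

end ZMod

namespace SimpleGraph

variable {α : Type} {G : SimpleGraph α}

lemma Reachable.mem_iff_of_adj {s : Set α} (hs : ∀ a b, G.Adj a b → (a ∈ s ↔ b ∈ s))
    {a b : α} (h : G.Reachable a b) : a ∈ s ↔ b ∈ s := by
  obtain ⟨p⟩ := h
  induction p with
  | nil => rfl
  | cons hadj _ ih => exact (hs _ _ hadj).trans ih

lemma compHasCycle_of_injective {k : ℕ} {c : ZMod (k + 3) → α} (hc : Injective c)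
    (hadj : ∀ i, G.Adj (c i) (c (i + 1))) (i : ZMod (k + 3)) : G.CompHasCycle (c i) := by
  let φ : cycleGraph (k + 3) →g G :=
    ⟨c, fun {a b} h ↦ h.elim (fun h ↦ eq_add_of_sub_eq' h ▸ (hadj b).symm)
      (fun h ↦ eq_add_of_sub_eq' h ▸ hadj a)⟩
  exact ⟨φ 0, (cycleGraph.cycle k).map φ,
    (Walk.isCycle_map_iff_of_injective hc).mpr cycleGraph.isCycle_cycle,
    (cycleGraph_preconnected i 0).map φ⟩

end SimpleGraph

namespace SimplicialSurface

variable {S : SimplicialSurface V E F}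

lemma vertices_edge_eq_pair {e : E} {u v : V} (huv : u ≠ v) (hu : S.vinc u e)
    (hv : S.vinc v e) : {x | S.vinc x e} = {u, v} :=
  Set.eq_pair_of_ncard_eq_two (S.edge_two_vertices e) hu hv huv

namespace VertexFaithful

variable (hvf : S.VertexFaithful)
include hvf

lemma edge_eq {e e' : E} {u v : V} (huv : u ≠ v) (hu : S.vinc u e) (hv : S.vinc v e)
    (hu' : S.vinc u e') (hv' : S.vinc v e') : e = e' :=
  hvf.1 e e' ((vertices_edge_eq_pair huv hu hv).trans (vertices_edge_eq_pair huv hu' hv').symm)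

lemma vertices_face_eq_union {e₁ e₂ : E} {f : F} (hne : e₁ ≠ e₂) (h₁ : S.einc e₁ f)
    (h₂ : S.einc e₂ f) : {v | S.vfinc v f} = {v | S.vinc v e₁} ∪ {v | S.vinc v e₂} := by
  set A := {v | S.vinc v e₁}
  set B := {v | S.vinc v e₂}
  have hA : A.ncard = 2 := S.edge_two_vertices e₁
  have hB : B.ncard = 2 := S.edge_two_vertices e₂
  have hsub : A ∪ B ⊆ {v | S.vfinc v f} := Set.union_subset
    (fun v hv ↦ (S.vfinc_iff v f).2 ⟨e₁, hv, h₁⟩) (fun v hv ↦ (S.vfinc_iff v f).2 ⟨e₂, hv, h₂⟩)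
  have hAB : 3 ≤ (A ∪ B).ncard := by
    by_contra! h
    have hfin : (A ∪ B).Finite :=
      (Set.finite_of_ncard_ne_zero (by omega)).union (Set.finite_of_ncard_ne_zero (by omega))
    have hAU := Set.eq_of_subset_of_ncard_le Set.subset_union_left (by omega) hfin
    have hBU := Set.eq_of_subset_of_ncard_le Set.subset_union_right (by omega) hfin
    exact hne (hvf.1 _ _ (hAU.trans hBU.symm))
  have hf : {v | S.vfinc v f}.ncard = 3 := S.face_three_vertices f
  exact (Set.eq_of_subset_of_ncard_le hsub (by omega)
    (Set.finite_of_ncard_ne_zero (by omega))).symm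

lemma face_eq_of_einc {e₁ e₂ : E} {f g : F} (hne : e₁ ≠ e₂) (h₁f : S.einc e₁ f)
    (h₂f : S.einc e₂ f) (h₁g : S.einc e₁ g) (h₂g : S.einc e₂ g) : f = g :=
  hvf.2 f g ((hvf.vertices_face_eq_union hne h₁f h₂f).trans
    (hvf.vertices_face_eq_union hne h₁g h₂g).symm)

lemma exists_edge_of_vfinc {f : F} {u v : V} (hu : S.vfinc u f) (hv : S.vfinc v f) :
    ∃ e, S.einc e f ∧ S.vinc u e ∧ S.vinc v e := by
  obtain ⟨e₁, e₂, hne, he⟩ := Set.ncard_eq_two.mp (S.face_vertex_two_edges f u hu)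
  have h₁ : e₁ ∈ {e | S.einc e f ∧ S.vinc u e} := he ▸ Set.mem_insert _ _
  have h₂ : e₂ ∈ {e | S.einc e f ∧ S.vinc u e} := he ▸ Set.mem_insert_of_mem _ rfl
  have hv' : v ∈ {x | S.vinc x e₁} ∪ {x | S.vinc x e₂} :=
    hvf.vertices_face_eq_union hne h₁.1 h₂.1 ▸ hv
  rcases hv' with hv' | hv'
  · exact ⟨e₁, h₁.1, h₁.2, hv'⟩
  · exact ⟨e₂, h₂.1, h₂.2, hv'⟩

lemma exists_umbrella (v : V) : ∃ (k : ℕ) (fa : ZMod (k + 3) → F), Injective fa ∧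
    (∀ f, S.vfinc v f ↔ ∃ i, fa i = f) ∧
    ∀ i, ∃ e, S.vinc v e ∧ S.einc e (fa i) ∧ S.einc e (fa (i + 1)) := by
  obtain ⟨m, hm, fa, ed, hfa, hed, hfaces, hedges, hinc⟩ := S.umbrella v
  obtain ⟨k, rfl⟩ : ∃ k, m = k + 3 := by
    refine ⟨m - 3, ?_⟩
    suffices m ≠ 2 by omega
    rintro rfl
    have h01 : (0 : ZMod 2) ≠ 1 := by decide
    exact h01 (hfa (hvf.face_eq_of_einc (hed.ne h01) (hinc 0).1 (hinc 1).2 (hinc 0).2 (hinc 1).1))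
  exact ⟨k, fa, hfa, hfaces, fun i ↦ ⟨ed i, (hedges _).2 ⟨i, rfl⟩, hinc i⟩⟩

lemma cutGraph_compHasCycle {A : Set E} {v : V} (hA : ∀ e, S.vinc v e → e ∉ A) {f : F}
    (hf : S.vfinc v f) : (S.cutGraph A).CompHasCycle f := by
  obtain ⟨k, fa, hfa, hfaces, hinc⟩ := hvf.exists_umbrella v
  obtain ⟨i, rfl⟩ := (hfaces f).1 hf
  have : Nontrivial (ZMod (k + 3)) := ZMod.nontrivial_iff.mpr (by omega)
  refine SimpleGraph.compHasCycle_of_injective hfa (fun j ↦ ?_) i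
  obtain ⟨e, hve, hj, hj'⟩ := hinc j
  exact (SimpleGraph.fromRel_adj _ _ _).mpr
    ⟨hfa.ne (add_ne_left.mpr one_ne_zero).symm, Or.inl ⟨e, hA e hve, hj, hj'⟩⟩

end VertexFaithful

variable {n : ℕ} {w : ZMod n → V} {we : ZMod n → E}

lemma IsWaist.three_le (hw : S.IsWaist n w we) : 3 ≤ n := by
  rcases hw.2 with ⟨rfl, -⟩ | ⟨h4, -⟩ <;> omega

lemma IsClosedPath.vertices_edge [Nontrivial (ZMod n)] (hp : S.IsClosedPath w we)
    (i : ZMod n) : {v | S.vinc v (we i)} = {w i, w (i + 1)} :=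
  vertices_edge_eq_pair (hp.1.ne (add_ne_left.mpr one_ne_zero).symm) (hp.2.2 i).1 (hp.2.2 i).2

lemma IsClosedPath.mem_range_of_vinc [Nontrivial (ZMod n)] (hp : S.IsClosedPath w we)
    {v : V} {i : ZMod n} (hv : S.vinc v (we i)) : v ∈ Set.range w := by
  rcases (hp.vertices_edge i ▸ hv : v ∈ ({w i, w (i + 1)} : Set V)) with rfl | rfl
  exacts [⟨_, rfl⟩, ⟨_, rfl⟩]

lemma IsClosedPath.edge_mem_range [Nontrivial (ZMod n)] (hvf : S.VertexFaithful)
    (hp : S.IsClosedPath w we) {i j : ZMod n} (hij : i - j = 1 ∨ i - j = -1) {e : E}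
    (hi : S.vinc (w i) e) (hj : S.vinc (w j) e) : e ∈ Set.range we := by
  have hne (t : ZMod n) : w t ≠ w (t + 1) := hp.1.ne (add_ne_left.mpr one_ne_zero).symm
  rcases hij with h | h
  · obtain rfl := eq_add_of_sub_eq' h
    exact ⟨j, hvf.edge_eq (hne j) (hp.2.2 j).1 (hp.2.2 j).2 hj hi⟩
  · obtain rfl := eq_add_of_sub_eq' (show j - i = 1 by rw [← neg_sub, h, neg_neg])
    exact ⟨i, hvf.edge_eq (hne i) (hp.2.2 i).1 (hp.2.2 i).2 hi hj⟩

lemma IsWaist.exists_vfinc_not_mem_range (hvf : S.VertexFaithful) (hw : S.IsWaist n w we)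
    (f : F) : ∃ v, S.vfinc v f ∧ v ∉ Set.range w := by
  have h3 := hw.three_le
  have : NeZero n := ⟨by omega⟩
  have : Nontrivial (ZMod n) := ZMod.nontrivial_iff.mpr (by omega)
  by_contra! hf
  obtain ⟨x, y, z, hxy, hxz, hyz, hxyz⟩ := Set.ncard_eq_three.mp (S.face_three_vertices f)
  have hx : x ∈ {v | S.vfinc v f} := by simp [hxyz]
  have hy : y ∈ {v | S.vfinc v f} := by simp [hxyz]
  have hz : z ∈ {v | S.vfinc v f} := by simp [hxyz]
  obtain ⟨i, rfl⟩ := hf x hx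
  obtain ⟨j, rfl⟩ := hf y hy
  obtain ⟨k, rfl⟩ := hf z hz
  obtain ⟨eij, hfij, hiij, hjij⟩ := hvf.exists_edge_of_vfinc hx hy
  obtain ⟨eik, hfik, hiik, hkik⟩ := hvf.exists_edge_of_vfinc hx hz
  obtain ⟨ejk, -, hjjk, hkjk⟩ := hvf.exists_edge_of_vfinc hy hz
  rcases hw.2 with ⟨rfl, hno⟩ | ⟨h4, -, hdist⟩
  · obtain ⟨s, rfl⟩ := hw.1.edge_mem_range hvf
      (ZMod.sub_eq_one_or_neg_one_of_ne_three (ne_of_apply_ne w hxy)) hiij hjij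
    obtain ⟨t, rfl⟩ := hw.1.edge_mem_range hvf
      (ZMod.sub_eq_one_or_neg_one_of_ne_three (ne_of_apply_ne w hxz)) hiik hkik
    refine hno s t (fun hst ↦ ?_) f ⟨hfij, hfik⟩
    subst hst
    have hk : w k ∈ ({w i, w j} : Set V) := vertices_edge_eq_pair hxy hiij hjij ▸ hkik
    rcases hk with h | h
    exacts [hxz h.symm, hyz h.symm]
  · have neighbours : ∀ {a b : ZMod n} {e : E}, w a ≠ w b → S.vinc (w a) e → S.vinc (w b) e →
        a - b = 1 ∨ a - b = -1 := fun hab ha hb ↦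
      ZMod.sub_eq_one_or_neg_one_of_min_val_eq_one <| (hdist _ _).symm.trans <|
        SimpleGraph.dist_eq_one_iff_adj.mpr <|
          (SimpleGraph.fromRel_adj _ _ _).mpr ⟨hab, Or.inl ⟨_, ha, hb⟩⟩
    exact ZMod.not_triangle h4 (neighbours hxy hiij hjij) (neighbours hyz hjjk hkjk)
      (neighbours hxz hiik hkik)

end SimplicialSurface

theorem separating_waist_not_cyclically_connected_general (S : SimplicialSurface V E F)
    (hvf : S.VertexFaithful) (n : ℕ)
    (w : ZMod n → V) (we : ZMod n → E) (hw : S.IsSeparatingWaist n w we) :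
    ¬ S.CyclicallyArcConnected (n + 1) := by
  obtain ⟨hwaist, s, ⟨f, hf⟩, ⟨g, hg⟩, hclosed, -, -⟩ := hw
  have : Nontrivial (ZMod n) := ZMod.nontrivial_iff.mpr (by have := hwaist.three_le; omega)
  have hcycle : ∀ f, (S.cutGraph (Set.range we)).CompHasCycle f := fun f ↦ by
    obtain ⟨v, hvf_face, hv_off⟩ := hwaist.exists_vfinc_not_mem_range hvf f
    refine hvf.cutGraph_compHasCycle ?_ hvf_face
    rintro e he ⟨t, rfl⟩
    exact hv_off (hwaist.1.mem_range_of_vinc he)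
  rw [SimplicialSurface.CyclicallyArcConnected, not_not]
  refine ⟨Set.range we, ?_, f, g, fun hfg ↦ hg ((hfg.mem_iff_of_adj hclosed).1 hf),
    hcycle f, hcycle g⟩
  rw [Set.ncard_range_of_injective hwaist.1.2.1, Nat.card_zmod]
  omega

/-- If a vertex-faithful simplicial surface has a separating
`n`-waist (`n ≥ 3`), then its face graph is not cyclically `(n+1)`-arc
connected: some set of at most `n` arcs disconnects it into at least two
components each containing a cycle. -/
theorem separating_waist_not_cyclically_connected (S : SimplicialSurface V E F)
    (hvf : S.VertexFaithful) (n : ℕ) (hn : 3 ≤ n)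
    (w : ZMod n → V) (we : ZMod n → E) (hw : S.IsSeparatingWaist n w we) :
    ¬ S.CyclicallyArcConnected (n + 1) :=
  separating_waist_not_cyclically_connected_general S hvf n w we hw
end

section
/- A cycle double cover of a cubic graph G consisting of cycles in which every arc of G is covered exactly twice determines a simplicial surface X with face graph isomorphic to G whose umbrellas are exactly the given cycles, provided every node of G lies on exactly three of the cycles. -/
namespace CDCAux
open SimpleGraph

variable {V : Type} {G : SimpleGraph V}

lemma edges_getElem {u v : V} (p : G.Walk u v) (i : ℕ) (hi : i < p.edges.length) :
    p.edges[i] = s(p.getVert i, p.getVert (i + 1)) := by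
  induction p generalizing i with
  | nil => simp at hi
  | cons h q ih =>
    cases i with
    | zero => simp [Walk.getVert_zero]
    | succ n =>
      simp only [Walk.edges_cons, List.getElem_cons_succ, Walk.getVert_cons_succ]
      exact ih n (by simpa using hi)

lemma support_getElem {u v : V} (p : G.Walk u v) (i : ℕ) (hi : i < p.support.length) :
    p.support[i] = p.getVert i := by
  induction p generalizing i with
  | nil =>
    simp only [Walk.support_nil, List.length_cons, List.length_nil] at hi
    interval_cases i
    simp [Walk.getVert_zero]
  | cons h q ih =>
    cases i with
    | zero => simp [Walk.getVert_zero]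
    | succ n =>
      simp only [Walk.support_cons, List.getElem_cons_succ, Walk.getVert_cons_succ]
      exact ih n (by simpa using hi)

lemma getVert_tail_eq {u : V} (p : G.Walk u u) (hL : p.support.tail.length = p.length) :
    ∀ c (h1 : 1 ≤ c) (hc : c ≤ p.length), p.getVert c = p.support.tail[c - 1]'(by omega) := by
  intro c h1 hc
  rw [List.getElem_tail, support_getElem p _ (by rw [p.length_support]; omega)]
  congr 1
  omega

lemma getVert_injOn {u : V} {p : G.Walk u u} (hp : p.IsCycle) :
    ∀ a < p.length, ∀ b < p.length, p.getVert a = p.getVert b → a = b := by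
  have hn3 := hp.three_le_length
  have hL : p.support.tail.length = p.length := by
    have := p.length_support
    simp [List.length_tail, this]
  have hnd : p.support.tail.Nodup := hp.2
  have inj' : ∀ a, 1 ≤ a → a ≤ p.length → ∀ b, 1 ≤ b → b ≤ p.length →
      p.getVert a = p.getVert b → a = b := by
    intro a h1a h2a b h1b h2b hab
    rw [getVert_tail_eq p hL a h1a h2a, getVert_tail_eq p hL b h1b h2b] at hab
    have := (List.Nodup.getElem_inj_iff hnd).mp hab
    omega
  intro a ha b hb hab
  rcases Nat.eq_zero_or_pos a with h | h <;> rcases Nat.eq_zero_or_pos b with h' | h'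
  · omega
  · subst h
    have hab2 : p.getVert p.length = p.getVert b := by
      rw [p.getVert_length]; rw [p.getVert_zero] at hab; exact hab
    have := inj' p.length (by omega) le_rfl b h' (by omega) hab2
    omega
  · subst h'
    have hab2 : p.getVert a = p.getVert p.length := by
      rw [p.getVert_length]; rw [p.getVert_zero] at hab; exact hab
    have := inj' a h (by omega) p.length (by omega) le_rfl hab2
    omega
  · exact inj' a h (by omega) b h' (by omega) hab

lemma mem_support_iff' {u v : V} {p : G.Walk u u} (hp : p.IsCycle) :
    v ∈ p.support ↔ ∃ k, k < p.length ∧ p.getVert k = v := by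
  have hn3 := hp.three_le_length
  rw [SimpleGraph.Walk.mem_support_iff_exists_getVert]
  constructor
  · rintro ⟨k, hk, hkl⟩
    rcases eq_or_lt_of_le hkl with rfl | h
    · have h0 : p.getVert 0 = p.getVert p.length := by
        rw [p.getVert_zero, p.getVert_length]
      exact ⟨0, by omega, h0.trans hk⟩
    · exact ⟨k, h, hk⟩
  · rintro ⟨k, hk, hkv⟩; exact ⟨k, hkv, by omega⟩

lemma mem_edges_iff' {u : V} (p : G.Walk u v) {e : Sym2 V} :
    e ∈ p.edges ↔ ∃ k, k < p.length ∧ s(p.getVert k, p.getVert (k + 1)) = e := by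
  rw [List.mem_iff_getElem]
  constructor
  · rintro ⟨i, hi, rfl⟩
    exact ⟨i, by simpa using hi, (edges_getElem p i hi).symm⟩
  · rintro ⟨k, hk, hke⟩
    exact ⟨k, by simpa using hk, by rw [edges_getElem p k (by simpa using hk)]; exact hke⟩

lemma support_iff_edge {u v : V} {p : G.Walk u u} (hp : p.IsCycle) :
    (∃ e ∈ p.edges, v ∈ e) ↔ v ∈ p.support := by
  have hn3 := hp.three_le_length
  constructor
  · rintro ⟨e, he, hv⟩
    obtain ⟨k, hk, rfl⟩ := (mem_edges_iff' p).mp he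
    rw [SimpleGraph.Walk.mem_support_iff_exists_getVert]
    rw [Sym2.mem_iff] at hv
    rcases hv with h | h
    · exact ⟨k, h.symm, by omega⟩
    · exact ⟨k + 1, h.symm, by omega⟩
  · intro hv
    obtain ⟨k, hk, hkv⟩ := (mem_support_iff' hp).mp hv
    exact ⟨s(p.getVert k, p.getVert (k + 1)), (mem_edges_iff' p).mpr ⟨k, hk, rfl⟩,
      by rw [← hkv]; exact Sym2.mem_mk_left _ _⟩

lemma cycle_two_edges {u v : V} {p : G.Walk u u} (hp : p.IsCycle) (hv : v ∈ p.support) :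
    {e : Sym2 V | e ∈ p.edges ∧ v ∈ e}.ncard = 2 := by
  have hn3 := hp.three_le_length
  obtain ⟨k, hk, hkv⟩ := (mem_support_iff' hp).mp hv
  have hinj := getVert_injOn hp
  set k' := if k = 0 then p.length - 1 else k - 1 with hk'
  have hk'lt : k' < p.length := by
    rcases Nat.eq_zero_or_pos k with h | h
    · rw [hk', if_pos h]; omega
    · rw [hk', if_neg (by omega)]; omega
  have hkk' : k ≠ k' := by
    rcases Nat.eq_zero_or_pos k with h | h
    · rw [hk', if_pos h]; omega
    · rw [hk', if_neg (by omega)]; omega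
  have hgk' : p.getVert (k' + 1) = v := by
    rcases Nat.eq_zero_or_pos k with h | h
    · have e1 : k' + 1 = p.length := by rw [hk', if_pos h]; omega
      rw [e1, p.getVert_length]
      have h2 : p.getVert k = u := by rw [h, p.getVert_zero]
      rw [← h2]; exact hkv
    · have e1 : k' + 1 = k := by rw [hk', if_neg (by omega)]; omega
      rw [e1]; exact hkv
  have hseteq : {e : Sym2 V | e ∈ p.edges ∧ v ∈ e} =
      {s(p.getVert k, p.getVert (k + 1)), s(p.getVert k', p.getVert (k' + 1))} := by
    ext e
    simp only [Set.mem_setOf_eq, Set.mem_insert_iff, Set.mem_singleton_iff]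
    constructor
    · rintro ⟨he, hve⟩
      obtain ⟨i, hi, rfl⟩ := (mem_edges_iff' p).mp he
      rw [Sym2.mem_iff] at hve
      rcases hve with h | h
      · left
        have := hinj i hi k hk (h.symm.trans hkv.symm)
        subst this; rfl
      · right
        have hik : i = k' := by
          rcases eq_or_lt_of_le (show i + 1 ≤ p.length by omega) with he1 | he1
          · have h0 : p.getVert 0 = p.getVert k := by
              rw [p.getVert_zero, hkv, h, he1, p.getVert_length]
            have hz := hinj 0 (by omega) k hk h0
            rw [hk', if_pos hz.symm]; omega
          · have := hinj (i + 1) he1 k hk (h.symm.trans hkv.symm)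
            rw [hk', if_neg (by omega)]; omega
        subst hik; rfl
    · rintro (rfl | rfl)
      · exact ⟨(mem_edges_iff' p).mpr ⟨k, hk, rfl⟩, by rw [← hkv]; exact Sym2.mem_mk_left _ _⟩
      · exact ⟨(mem_edges_iff' p).mpr ⟨k', hk'lt, rfl⟩, by rw [← hgk']; exact Sym2.mem_mk_right _ _⟩
  rw [hseteq]
  apply Set.ncard_pair
  have h1 := edges_getElem p k (by simpa using hk)
  have h2 := edges_getElem p k' (by simpa using hk'lt)
  rw [← h1, ← h2]
  intro hcon
  exact hkk' ((List.Nodup.getElem_inj_iff hp.edges_nodup).mp hcon)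

end CDCAux




variable {V E F : Type}

/-- A cycle double cover of a cubic graph `G` in which every node
lies on exactly three of the cycles determines a simplicial surface with
vertices the cycles, edges the arcs of `G` and faces the nodes of `G`, whose
face graph is (equal to, hence isomorphic to) `G`. -/
theorem cdc_gives_simplicial_surface {W : Type} [Fintype W] [DecidableEq W]
    (G : SimpleGraph W) [DecidableRel G.Adj]
    (hcubic : ∀ v, G.degree v = 3) {ι : Type}
    (cyc : ι → Σ v : W, G.Walk v v) (hcyc : ∀ i, (cyc i).2.IsCycle)
    (hdouble : ∀ e ∈ G.edgeSet, {i | e ∈ (cyc i).2.edges}.ncard = 2)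
    (hnode : ∀ v : W, {i | v ∈ (cyc i).2.support}.ncard = 3) :
    ∃ S : SimplicialSurface ι G.edgeSet W,
      (∀ (i : ι) (e : G.edgeSet), S.vinc i e ↔ (e : Sym2 W) ∈ (cyc i).2.edges) ∧
      (∀ (e : G.edgeSet) (v : W), S.einc e v ↔ v ∈ (e : Sym2 W)) ∧
      S.faceGraph = G := by
  classical
  have hvf : ∀ (i : ι) (f : W),
      (∃ e : G.edgeSet, (e : Sym2 W) ∈ (cyc i).2.edges ∧ f ∈ (e : Sym2 W)) ↔
        f ∈ (cyc i).2.support := by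
    intro i f
    rw [← CDCAux.support_iff_edge (hcyc i)]
    constructor
    · rintro ⟨e, he, hv⟩; exact ⟨e.val, he, hv⟩
    · rintro ⟨e, he, hv⟩; exact ⟨⟨e, (cyc i).2.edges_subset_edgeSet he⟩, he, hv⟩
  refine ⟨{
    vinc := fun i e => (e : Sym2 W) ∈ (cyc i).2.edges
    einc := fun e v => v ∈ (e : Sym2 W)
    vfinc := fun i v => ∃ e : G.edgeSet, (e : Sym2 W) ∈ (cyc i).2.edges ∧ v ∈ (e : Sym2 W)
    vfinc_iff := fun v f => Iff.rfl
    edge_two_vertices := fun e => hdouble e.val e.2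
    edge_two_faces := ?_
    face_three_edges := ?_
    face_three_vertices := ?_
    face_vertex_two_edges := ?_
    umbrella := ?_ }, fun i e => Iff.rfl, fun e v => Iff.rfl, ?_⟩
  · -- edge_two_faces
    rintro ⟨e, he⟩
    induction e using Sym2.ind with
    | _ a b =>
      have hab : a ≠ b := G.ne_of_adj (G.mem_edgeSet.mp he)
      have : {v | v ∈ ((⟨s(a, b), he⟩ : G.edgeSet) : Sym2 W)} = {a, b} := by
        ext w; simp [Sym2.mem_iff]
      rw [this]
      exact Set.ncard_pair hab
  · -- face_three_edges
    intro v
    have himg : Subtype.val '' {e : G.edgeSet | v ∈ (e : Sym2 W)} = G.incidenceSet v := by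
      ext e
      constructor
      · rintro ⟨⟨e, he⟩, hv, rfl⟩; exact ⟨he, hv⟩
      · rintro ⟨he, hv⟩; exact ⟨⟨e, he⟩, hv, rfl⟩
    rw [← Set.ncard_image_of_injective _ Subtype.val_injective, himg,
      ← Nat.card_coe_set_eq, Nat.card_eq_fintype_card,
      G.card_incidenceSet_eq_degree, hcubic]
  · -- face_three_vertices
    intro v
    have : {i | ∃ e : G.edgeSet, (e : Sym2 W) ∈ (cyc i).2.edges ∧ v ∈ (e : Sym2 W)} =
        {i | v ∈ (cyc i).2.support} := by
      ext i; exact hvf i v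
    rw [this]
    exact hnode v
  · -- face_vertex_two_edges
    intro w i hwi
    have hw : w ∈ (cyc i).2.support := (hvf i w).mp hwi
    have himg : Subtype.val '' {e : G.edgeSet | w ∈ (e : Sym2 W) ∧ (e : Sym2 W) ∈ (cyc i).2.edges}
        = {e : Sym2 W | e ∈ (cyc i).2.edges ∧ w ∈ e} := by
      ext e
      constructor
      · rintro ⟨⟨e, he⟩, ⟨hv, hme⟩, rfl⟩; exact ⟨hme, hv⟩
      · rintro ⟨hme, hv⟩
        exact ⟨⟨e, (cyc i).2.edges_subset_edgeSet hme⟩, ⟨hv, hme⟩, rfl⟩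
    rw [← Set.ncard_image_of_injective _ Subtype.val_injective, himg]
    exact CDCAux.cycle_two_edges (hcyc i) hw
  · -- umbrella
    intro i
    set p := (cyc i).2 with hp
    have hn3 : 3 ≤ p.length := (hcyc i).three_le_length
    haveI : NeZero p.length := ⟨by omega⟩
    haveI : Fact (1 < p.length) := ⟨by omega⟩
    have hinj : ∀ a < p.length, ∀ b < p.length, p.getVert a = p.getVert b → a = b :=
      CDCAux.getVert_injOn (hcyc i)
    refine ⟨p.length, by omega, fun j => p.getVert j.val,
      fun j => ⟨s(p.getVert j.val, p.getVert (j.val + 1)),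
        G.mem_edgeSet.mpr (p.adj_getVert_succ (ZMod.val_lt j))⟩, ?_, ?_, ?_, ?_, ?_⟩
    · -- fa injective
      intro j1 j2 heq
      have := hinj j1.val (ZMod.val_lt j1) j2.val (ZMod.val_lt j2) heq
      exact ZMod.val_injective _ this
    · -- ed injective
      intro j1 j2 heq
      have h1 : s(p.getVert j1.val, p.getVert (j1.val + 1))
          = s(p.getVert j2.val, p.getVert (j2.val + 1)) := congrArg Subtype.val heq
      have e1 := CDCAux.edges_getElem p j1.val (by simpa using ZMod.val_lt j1)
      have e2 := CDCAux.edges_getElem p j2.val (by simpa using ZMod.val_lt j2)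
      rw [← e1, ← e2] at h1
      have := (List.Nodup.getElem_inj_iff (hcyc i).edges_nodup).mp h1
      exact ZMod.val_injective _ this
    · -- fa covers
      intro f
      show (∃ e : G.edgeSet, (e : Sym2 W) ∈ p.edges ∧ f ∈ (e : Sym2 W)) ↔
        ∃ j : ZMod p.length, p.getVert j.val = f
      rw [show (∃ e : G.edgeSet, (e : Sym2 W) ∈ p.edges ∧ f ∈ (e : Sym2 W)) ↔ f ∈ p.support
          from hvf i f, CDCAux.mem_support_iff' (hcyc i)]
      constructor
      · rintro ⟨k, hk, hkf⟩
        refine ⟨(k : ZMod p.length), ?_⟩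
        rw [ZMod.val_cast_of_lt hk]
        exact hkf
      · rintro ⟨j, rfl⟩
        exact ⟨j.val, ZMod.val_lt j, rfl⟩
    · -- ed covers
      intro e
      constructor
      · intro he
        obtain ⟨k, hk, hke⟩ := (CDCAux.mem_edges_iff' p).mp he
        refine ⟨(k : ZMod p.length), ?_⟩
        apply Subtype.ext
        show s(p.getVert ((k : ZMod p.length)).val, p.getVert (((k : ZMod p.length)).val + 1))
          = (e : Sym2 W)
        rw [ZMod.val_cast_of_lt hk]
        exact hke
      · rintro ⟨j, rfl⟩
        exact (CDCAux.mem_edges_iff' p).mpr ⟨j.val, ZMod.val_lt j, rfl⟩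
    · -- incidences
      intro j
      constructor
      · exact Sym2.mem_mk_left _ _
      · have hval : (j + 1).val = (j.val + 1) % p.length := by
          rw [ZMod.val_add, ZMod.val_one]
        have hkey : p.getVert ((j + 1).val) = p.getVert (j.val + 1) := by
          rcases lt_or_eq_of_le (Nat.succ_le_of_lt (ZMod.val_lt j)) with h | h
          · rw [hval, Nat.mod_eq_of_lt h]
          · have h3 : j.val + 1 = p.length := h
            have h2 : (j.val + 1) % p.length = 0 := by rw [h3]; exact Nat.mod_self _
            rw [hval, h2, h3, p.getVert_zero, p.getVert_length]
        show p.getVert ((j + 1).val) ∈ s(p.getVert j.val, p.getVert (j.val + 1))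
        rw [hkey]
        exact Sym2.mem_mk_right _ _
  · -- faceGraph = G
    ext a b
    simp only [SimplicialSurface.faceGraph, SimpleGraph.fromRel_adj]
    constructor
    · rintro ⟨hne, (⟨e, ha, hb⟩ | ⟨e, hb, ha⟩)⟩
      · have he : (e : Sym2 W) = s(a, b) := (Sym2.mem_and_mem_iff hne).mp ⟨ha, hb⟩
        exact G.mem_edgeSet.mp (he ▸ e.2)
      · have he : (e : Sym2 W) = s(b, a) := (Sym2.mem_and_mem_iff hne.symm).mp ⟨hb, ha⟩
        exact (G.mem_edgeSet.mp (he ▸ e.2)).symm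
    · intro hab
      exact ⟨G.ne_of_adj hab, Or.inl ⟨⟨s(a, b), hab⟩, Sym2.mem_mk_left _ _,
        Sym2.mem_mk_right _ _⟩⟩
end

section
/- Let X be a vertex-faithful simplicial sphere not isomorphic to the tetrahedron. If all vertices of X have even degree, then the edge graph E(X) contains no subgraph isomorphic to K4. -/
variable {V E F : Type}

open Matrix Module

namespace Matrix

variable {A B C K : Type*} [Fintype B] [Field K]

theorem finrank_ker_mulVecLin_add_rank (M : Matrix A B K) :
    finrank K (LinearMap.ker M.mulVecLin) + M.rank = Fintype.card B := by
  rw [rank, add_comm, LinearMap.finrank_range_add_finrank_ker, finrank_fintype_fun_eq_card]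

theorem card_le_rank_add_one_of_forall_vecMul_eq_zero [Fintype A] (M : Matrix A B K)
    (h : ∀ c : A → K, c ᵥ* M = 0 → ∀ a a', c a = c a') :
    Fintype.card A ≤ M.rank + 1 := by
  cases isEmpty_or_nonempty A
  · simp
  have hker : LinearMap.ker Mᵀ.mulVecLin ≤ K ∙ (fun _ => 1 : A → K) := by
    intro c hc
    have hconst := h c (by simpa [mulVec_transpose] using hc) (Classical.arbitrary A)
    exact Submodule.mem_span_singleton.mpr ⟨c (Classical.arbitrary A), by ext a; simp [hconst a]⟩
  have hone : finrank K (K ∙ (fun _ => 1 : A → K)) ≤ 1 :=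
    (finrank_span_le_card _).trans (by simp)
  have := finrank_ker_mulVecLin_add_rank Mᵀ
  have := Submodule.finrank_mono hker
  rw [rank_transpose] at *
  omega

theorem ker_mulVecLin_eq_range_transpose [Fintype A] [Fintype C] (M : Matrix A B K)
    (N : Matrix C B K) (hMN : M * Nᵀ = 0) (hM : Fintype.card A ≤ M.rank + 1)
    (hN : Fintype.card C ≤ N.rank + 1)
    (hcard : Fintype.card A + Fintype.card C = Fintype.card B + 2) :
    LinearMap.ker M.mulVecLin = LinearMap.range Nᵀ.mulVecLin := by
  have hle : LinearMap.range Nᵀ.mulVecLin ≤ LinearMap.ker M.mulVecLin := by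
    rintro _ ⟨x, rfl⟩
    simp only [LinearMap.mem_ker, mulVecLin_apply, mulVec_mulVec, hMN, zero_mulVec]
  refine (Submodule.eq_of_le_of_finrank_le hle ?_).symm
  have := finrank_ker_mulVecLin_add_rank M
  have : finrank K (LinearMap.range Nᵀ.mulVecLin) = N.rank := by rw [← rank, rank_transpose]
  omega

end Matrix

theorem SimpleGraph.Preconnected.eq_of_forall_adj {α : Type*} {β : Sort*} {G : SimpleGraph α}
    (hG : G.Preconnected) {φ : α → β} (h : ∀ a b, G.Adj a b → φ a = φ b) (a b : α) :
    φ a = φ b := by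
  obtain ⟨p⟩ := hG a b
  induction p with
  | nil => rfl
  | cons hadj _ ih => exact (h _ _ hadj).trans ih

theorem exists_iff_eq_or_eq_of_ncard_eq_two {α : Type*} {p : α → Prop}
    (h : {x | p x}.ncard = 2) : ∃ a b, a ≠ b ∧ ∀ x, p x ↔ x = a ∨ x = b := by
  obtain ⟨a, b, hab, hs⟩ := Set.ncard_eq_two.mp h
  exact ⟨a, b, hab, fun x => by simpa using Set.ext_iff.mp hs x⟩

theorem Fintype.sum_boole_eq_ncard {α R : Type*} [Fintype α] [AddCommMonoidWithOne R]
    (p : α → Prop) [DecidablePred p] : ∑ a, (if p a then (1 : R) else 0) = {a | p a}.ncard := by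
  rw [Finset.sum_boole, Set.ncard_eq_toFinset_card', Set.toFinset_ofPred]

namespace SimplicialSurface

variable (S : SimplicialSurface V E F)

structure EdgeLabelling where
  src : E → V
  tgt : E → V
  src_ne_tgt : ∀ e, src e ≠ tgt e
  vinc_iff : ∀ v e, S.vinc v e ↔ v = src e ∨ v = tgt e
  face₁ : E → F
  face₂ : E → F
  face₁_ne_face₂ : ∀ e, face₁ e ≠ face₂ e
  einc_iff : ∀ e f, S.einc e f ↔ f = face₁ e ∨ f = face₂ e

theorem nonempty_edgeLabelling : Nonempty S.EdgeLabelling := by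
  choose src tgt hne hv using fun e => exists_iff_eq_or_eq_of_ncard_eq_two (S.edge_two_vertices e)
  choose f₁ f₂ hfne hf using fun e => exists_iff_eq_or_eq_of_ncard_eq_two (S.edge_two_faces e)
  exact ⟨⟨src, tgt, hne, fun v e => hv e v, f₁, f₂, hfne, hf⟩⟩

open Classical in
noncomputable def faceIncidence : Matrix F E (ZMod 2) :=
  fun f e => if S.einc e f then 1 else 0

variable {S}

theorem exists_vinc (v : V) : ∃ e, S.vinc v e := by
  obtain ⟨n, -, -, ed, -, -, -, hed, -⟩ := S.umbrella v
  exact ⟨ed 0, (hed _).mpr ⟨0, rfl⟩⟩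

theorem ncard_setOf_vinc (v : V) : {e | S.vinc v e}.ncard = {f | S.vfinc v f}.ncard := by
  obtain ⟨n, -, fa, ed, hfa, hed, hfa_range, hed_range, -⟩ := S.umbrella v
  have hF : {f | S.vfinc v f} = Set.range fa := Set.ext hfa_range
  have hE : {e | S.vinc v e} = Set.range ed := Set.ext hed_range
  rw [hF, hE, ← Nat.card_coe_set_eq, ← Nat.card_coe_set_eq, Nat.card_range_of_injective hed,
    Nat.card_range_of_injective hfa]

theorem vfinc_of_einc_of_vinc {v : V} {e : E} {f : F} (he : S.einc e f) (hv : S.vinc v e) :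
    S.vfinc v f :=
  (S.vfinc_iff v f).mpr ⟨e, hv, he⟩

theorem exists_vinc_vinc_of_einc [Finite V] {e₁ e₂ : E} {f : F} (h₁ : S.einc e₁ f)
    (h₂ : S.einc e₂ f) : ∃ v, S.vinc v e₁ ∧ S.vinc v e₂ := by
  have hunion : {v | S.vinc v e₁} ∪ {v | S.vinc v e₂} ⊆ {v | S.vfinc v f} := by
    rintro v (hv | hv)
    exacts [vfinc_of_einc_of_vinc h₁ hv, vfinc_of_einc_of_vinc h₂ hv]
  have := Set.ncard_inter_add_ncard_union {v | S.vinc v e₁} {v | S.vinc v e₂}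
  have := Set.ncard_le_ncard hunion
  rw [S.edge_two_vertices, S.edge_two_vertices] at *
  rw [S.face_three_vertices] at *
  exact Set.nonempty_of_ncard_ne_zero (s := {v | S.vinc v e₁} ∩ {v | S.vinc v e₂}) (by omega)

theorem eq_of_einc_of_vinc [Finite E] {e₁ e₂ : E} {f : F} {p q : V} (hpq : p ≠ q)
    (h₁ : S.einc e₁ f) (hp₁ : S.vinc p e₁) (hq₁ : S.vinc q e₁)
    (h₂ : S.einc e₂ f) (hp₂ : S.vinc p e₂) (hq₂ : S.vinc q e₂) : e₁ = e₂ := by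
  by_contra hne
  obtain ⟨L⟩ := S.nonempty_edgeLabelling
  have hpair : ({p, q} : Set V).ncard < {v | S.vfinc v f}.ncard := by
    rw [Set.ncard_pair hpq, S.face_three_vertices]; norm_num
  obtain ⟨y, hy, hypq⟩ := Set.exists_mem_notMem_of_ncard_lt_ncard hpair
  have hy_not : ∀ e, S.vinc p e → S.vinc q e → ¬ S.vinc y e := by
    intro e hp hq hy
    rw [L.vinc_iff] at hp hq hy
    have := L.src_ne_tgt e
    apply hypq
    simp only [Set.mem_insert_iff, Set.mem_singleton_iff]
    grind
  -- `y` lies on two edges of `f` other than `e₁` and `e₂`, so `f` would have four edges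
  have hdisj : Disjoint ({e₁, e₂} : Set E) {e | S.einc e f ∧ S.vinc y e} := by
    rw [Set.disjoint_left]
    rintro e (rfl | rfl) ⟨-, hy⟩
    exacts [hy_not _ hp₁ hq₁ hy, hy_not _ hp₂ hq₂ hy]
  have hsub : ({e₁, e₂} : Set E) ∪ {e | S.einc e f ∧ S.vinc y e} ⊆ {e | S.einc e f} := by
    rintro e ((rfl | rfl) | ⟨he, -⟩)
    exacts [h₁, h₂, he]
  have := Set.ncard_le_ncard hsub
  rw [Set.ncard_union_eq hdisj, Set.ncard_pair hne, S.face_vertex_two_edges f y hy,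
    S.face_three_edges] at this
  omega

theorem exists_injOn_zmod_three (f : F) : ∃ ι : V → ZMod 3, Set.InjOn ι {v | S.vfinc v f} := by
  classical
  obtain ⟨a, b, c, hab, hac, hbc, hs⟩ := Set.ncard_eq_three.mp (S.face_three_vertices f)
  refine ⟨fun v => if v = a then 0 else if v = b then 1 else 2, ?_⟩
  rw [hs]
  rintro x (rfl | rfl | rfl) y (rfl | rfl | rfl) <;>
    simp [hab, hac, hbc, hab.symm, hac.symm, hbc.symm] <;> decide

namespace EdgeLabelling

variable (L : S.EdgeLabelling)

theorem vinc_src (e : E) : S.vinc (L.src e) e := (L.vinc_iff _ e).mpr (.inl rfl)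

theorem vinc_tgt (e : E) : S.vinc (L.tgt e) e := (L.vinc_iff _ e).mpr (.inr rfl)

theorem einc_face₁ (e : E) : S.einc e (L.face₁ e) := (L.einc_iff e _).mpr (.inl rfl)

theorem einc_face₂ (e : E) : S.einc e (L.face₂ e) := (L.einc_iff e _).mpr (.inr rfl)

theorem faceGraph_adj (e : E) : S.faceGraph.Adj (L.face₁ e) (L.face₂ e) := by
  rw [faceGraph, SimpleGraph.fromRel_adj]
  exact ⟨L.face₁_ne_face₂ e, .inl ⟨e, L.einc_face₁ e, L.einc_face₂ e⟩⟩

theorem exists_of_faceGraph_adj {f g : F} (h : S.faceGraph.Adj f g) :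
    ∃ e, f = L.face₁ e ∧ g = L.face₂ e ∨ f = L.face₂ e ∧ g = L.face₁ e := by
  rw [faceGraph, SimpleGraph.fromRel_adj] at h
  obtain ⟨hne, ⟨e, hf, hg⟩ | ⟨e, hg, hf⟩⟩ := h <;>
  · rw [L.einc_iff] at hf hg
    exact ⟨e, by grind⟩

theorem exists_of_edgeGraph_adj {u w : V} (h : S.edgeGraph.Adj u w) :
    ∃ e, u = L.src e ∧ w = L.tgt e ∨ u = L.tgt e ∧ w = L.src e := by
  rw [edgeGraph, SimpleGraph.fromRel_adj] at h
  obtain ⟨hne, ⟨e, hu, hw⟩ | ⟨e, hw, hu⟩⟩ := h <;>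
  · rw [L.vinc_iff] at hu hw
    exact ⟨e, by grind⟩

theorem eq_of_forall_face_eq {α : Sort*} (hconn : S.faceGraph.Connected) {φ : F → α}
    (h : ∀ e, φ (L.face₁ e) = φ (L.face₂ e)) (f g : F) : φ f = φ g := by
  refine hconn.preconnected.eq_of_forall_adj (fun f g hfg => ?_) f g
  obtain ⟨e, ⟨rfl, rfl⟩ | ⟨rfl, rfl⟩⟩ := L.exists_of_faceGraph_adj hfg
  exacts [h e, (h e).symm]

theorem eq_of_forall_edge_eq [Finite V] {α : Sort*} (hconn : S.faceGraph.Connected)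
    {c : V → α} (h : ∀ e, c (L.src e) = c (L.tgt e)) (u v : V) : c u = c v := by
  have hend : ∀ {v e}, S.vinc v e → c v = c (L.src e) := fun hv => by
    rcases (L.vinc_iff _ _).mp hv with rfl | rfl
    exacts [rfl, (h _).symm]
  have hface : ∀ {e e' f}, S.einc e f → S.einc e' f → c (L.src e) = c (L.src e') := by
    intro e e' f he he'
    obtain ⟨r, hr, hr'⟩ := exists_vinc_vinc_of_einc he he'
    exact (hend hr).symm.trans (hend hr')
  choose ε hε using fun f => Set.nonempty_of_ncard_ne_zero (s := {e | S.einc e f})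
    (by rw [S.face_three_edges]; norm_num)
  have hconst := L.eq_of_forall_face_eq hconn (φ := fun f => c (L.src (ε f)))
    fun e => (hface (hε _) (L.einc_face₁ e)).trans (hface (L.einc_face₂ e) (hε _))
  obtain ⟨eu, hu⟩ := S.exists_vinc u
  obtain ⟨ev, hv⟩ := S.exists_vinc v
  calc c u = c (L.src (ε (L.face₁ eu))) := (hend hu).trans (hface (L.einc_face₁ eu) (hε _))
    _ = c (L.src (ε (L.face₁ ev))) := hconst _ _
    _ = c v := ((hend hv).trans (hface (L.einc_face₁ ev) (hε _))).symm

open Classical in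
noncomputable def incidence (R : Type*) [Ring R] : Matrix V E R :=
  fun v e => (if v = L.src e then 1 else 0) - (if v = L.tgt e then 1 else 0)

theorem vecMul_incidence [Fintype V] {R : Type*} [Ring R] (c : V → R) (e : E) :
    (c ᵥ* L.incidence R) e = c (L.src e) - c (L.tgt e) := by
  classical
  simp [Matrix.vecMul, dotProduct, incidence, mul_sub, Finset.sum_sub_distrib]

theorem incidence_mul_sub_of_vinc {R : Type*} [Ring R] {v : V} {e : E} (hv : S.vinc v e) :
    ∃ w, S.vinc w e ∧ w ≠ v ∧
      ∀ r : V → R, L.incidence R v e * (r (L.src e) - r (L.tgt e)) = r v - r w := by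
  have hne := L.src_ne_tgt e
  rcases (L.vinc_iff v e).mp hv with rfl | rfl
  · exact ⟨L.tgt e, L.vinc_tgt e, hne.symm, fun r => by simp [incidence, hne]⟩
  · exact ⟨L.src e, L.vinc_src e, hne, fun r => by simp [incidence, hne.symm]⟩

open Classical in
theorem incidence_zmod_two (v : V) (e : E) :
    L.incidence (ZMod 2) v e = if S.vinc v e then 1 else 0 := by
  have := L.src_ne_tgt e
  simp only [incidence, L.vinc_iff]
  split_ifs <;> first | decide | grind

theorem vecMul_eq_of_support [Fintype F] {R : Type*} [CommSemiring R] {D : Matrix F E R}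
    (hD : ∀ f e, D f e ≠ 0 → S.einc e f) (c : F → R) (e : E) :
    (c ᵥ* D) e = c (L.face₁ e) * D (L.face₁ e) e + c (L.face₂ e) * D (L.face₂ e) e := by
  refine Fintype.sum_eq_add _ _ (L.face₁_ne_face₂ e) fun f hf => ?_
  by_contra h
  have := (L.einc_iff e f).mp (hD f e (right_ne_zero_of_mul h))
  tauto

theorem card_le_rank_incidence_add_one [Fintype V] [Fintype E] (K : Type*) [Field K]
    (hconn : S.faceGraph.Connected) : Fintype.card V ≤ (L.incidence K).rank + 1 :=
  card_le_rank_add_one_of_forall_vecMul_eq_zero _ fun c hc => L.eq_of_forall_edge_eq hconn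
    fun e => sub_eq_zero.mp <| by rw [← L.vecMul_incidence, hc, Pi.zero_apply]

/-- `D` is the matrix of a boundary map `∂₂ : K^F → K^E` with `∂₁ ∘ ∂₂ = 0` for
`∂₁ = L.incidence K`, supported on the face-edge incidences, and such that the sum of all faces
is a cycle: a coherent orientation of the surface with coefficients in `K`. -/
structure IsFaceBoundary {K : Type*} [Field K] [Fintype E] (D : Matrix F E K) : Prop where
  incidence_mul_transpose : L.incidence K * Dᵀ = 0
  ne_zero_iff : ∀ f e, D f e ≠ 0 ↔ S.einc e f
  face₁_add_face₂ : ∀ e, D (L.face₁ e) e + D (L.face₂ e) e = 0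

namespace IsFaceBoundary

variable {L} {K : Type*} [Field K] [Fintype E] [Fintype F] {D : Matrix F E K}

theorem card_le_rank_add_one (hD : L.IsFaceBoundary D) (hconn : S.faceGraph.Connected) :
    Fintype.card F ≤ D.rank + 1 := by
  refine card_le_rank_add_one_of_forall_vecMul_eq_zero _ fun c hc =>
    L.eq_of_forall_face_eq hconn fun e => ?_
  have h := congrFun hc e
  rw [L.vecMul_eq_of_support (fun f e => (hD.ne_zero_iff f e).mp), Pi.zero_apply,
    eq_neg_of_add_eq_zero_right (hD.face₁_add_face₂ e)] at h
  have hne := (hD.ne_zero_iff _ e).mpr (L.einc_face₁ e)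
  exact sub_eq_zero.mp <| (mul_eq_zero.mp (by linear_combination h)).resolve_left hne

variable [Fintype V]

theorem ker_incidence_eq_range (hD : L.IsFaceBoundary D) (hconn : S.faceGraph.Connected)
    (hχ : Fintype.card V + Fintype.card F = Fintype.card E + 2) :
    LinearMap.ker (L.incidence K).mulVecLin = LinearMap.range Dᵀ.mulVecLin :=
  ker_mulVecLin_eq_range_transpose _ _ hD.incidence_mul_transpose
    (L.card_le_rank_incidence_add_one K hconn) (hD.card_le_rank_add_one hconn) hχ

theorem ker_eq_range_incidence (hD : L.IsFaceBoundary D) (hconn : S.faceGraph.Connected)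
    (hχ : Fintype.card V + Fintype.card F = Fintype.card E + 2) :
    LinearMap.ker D.mulVecLin = LinearMap.range (L.incidence K)ᵀ.mulVecLin := by
  refine ker_mulVecLin_eq_range_transpose _ _ ?_ (hD.card_le_rank_add_one hconn)
    (L.card_le_rank_incidence_add_one K hconn) (by omega)
  rw [← transpose_transpose (D * _), transpose_mul, transpose_transpose,
    hD.incidence_mul_transpose, transpose_zero]

end IsFaceBoundary

theorem isFaceBoundary_faceIncidence [Fintype E] : L.IsFaceBoundary S.faceIncidence where
  incidence_mul_transpose := by
    classical
    ext v f
    simp only [mul_apply, transpose_apply, incidence_zmod_two, faceIncidence, Matrix.zero_apply,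
      mul_ite, mul_one, mul_zero, ← ite_and, Fintype.sum_boole_eq_ncard]
    by_cases hv : S.vfinc v f
    · rw [S.face_vertex_two_edges f v hv]
      rfl
    · rw [Set.eq_empty_of_forall_notMem (s := {e | S.einc e f ∧ S.vinc v e})
        fun e he => hv (vfinc_of_einc_of_vinc he.1 he.2)]
      simp
  ne_zero_iff f e := by simp [faceIncidence]
  face₁_add_face₂ e := by simp [faceIncidence, L.einc_face₁, L.einc_face₂]; decide

theorem incidence_mulVec_one_zmod_two [Fintype E]
    (heven : ∀ v : V, Even {f | S.vfinc v f}.ncard) : L.incidence (ZMod 2) *ᵥ 1 = 0 := by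
  classical
  ext v
  simp only [mulVec, dotProduct, Pi.one_apply, mul_one, incidence_zmod_two,
    Fintype.sum_boole_eq_ncard, ncard_setOf_vinc, Pi.zero_apply]
  exact (ZMod.natCast_eq_zero_iff_even).mpr (heven v)

open Classical in
noncomputable def faceBoundary (ι : F → V → ZMod 3) : Matrix F E (ZMod 3) :=
  fun f e => if S.einc e f then ι f (L.src e) - ι f (L.tgt e) else 0

section FaceBoundary

variable {ι : F → V → ZMod 3} (hι : ∀ f, Set.InjOn (ι f) {v | S.vfinc v f})
include hι

theorem faceBoundary_ne_zero_iff (f : F) (e : E) : L.faceBoundary ι f e ≠ 0 ↔ S.einc e f := by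
  by_cases he : S.einc e f
  · rw [faceBoundary, if_pos he, ne_eq, sub_eq_zero, iff_true_intro he, iff_true]
    exact (L.src_ne_tgt e) ∘ hι f (vfinc_of_einc_of_vinc he (L.vinc_src e))
      (vfinc_of_einc_of_vinc he (L.vinc_tgt e))
  · simp [faceBoundary, he]

theorem incidence_mul_faceBoundary_transpose [Fintype E] :
    L.incidence (ZMod 3) * (L.faceBoundary ι)ᵀ = 0 := by
  ext v f
  simp only [mul_apply, transpose_apply, Matrix.zero_apply]
  have hzero : ∀ e, ¬ (S.einc e f ∧ S.vinc v e) →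
      L.incidence (ZMod 3) v e * L.faceBoundary ι f e = 0 := by
    intro e he
    by_cases hef : S.einc e f
    · have hv : ¬ (v = L.src e ∨ v = L.tgt e) := (L.vinc_iff v e).not.mp (he ⟨hef, ·⟩)
      simp [incidence, not_or.mp hv]
    · simp [faceBoundary, hef]
  by_cases hv : S.vfinc v f
  · obtain ⟨ea, eb, hab, hedges⟩ :=
      exists_iff_eq_or_eq_of_ncard_eq_two (S.face_vertex_two_edges f v hv)
    obtain ⟨hfa, hva⟩ := (hedges ea).mpr (.inl rfl)
    obtain ⟨hfb, hvb⟩ := (hedges eb).mpr (.inr rfl)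
    obtain ⟨a, ha, hav, hQa⟩ := L.incidence_mul_sub_of_vinc (R := ZMod 3) hva
    obtain ⟨b, hb, hbv, hQb⟩ := L.incidence_mul_sub_of_vinc (R := ZMod 3) hvb
    have hab' : a ≠ b := fun h => hab (eq_of_einc_of_vinc hav.symm hfa hva ha hfb hvb (h ▸ hb))
    rw [Fintype.sum_eq_add ea eb hab fun e he => hzero e fun h => by grind]
    simp only [faceBoundary, if_pos hfa, if_pos hfb, hQa, hQb]
    have key : ∀ x y z : ZMod 3, x ≠ y → x ≠ z → y ≠ z → (x - y) + (x - z) = 0 := by decide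
    have hf := hι f
    exact key _ _ _ (hf.ne hv (vfinc_of_einc_of_vinc hfa ha) hav.symm)
      (hf.ne hv (vfinc_of_einc_of_vinc hfb hb) hbv.symm)
      (hf.ne (vfinc_of_einc_of_vinc hfa ha) (vfinc_of_einc_of_vinc hfb hb) hab')
  · exact Finset.sum_eq_zero fun e _ =>
      hzero e fun ⟨hef, hve⟩ => hv (vfinc_of_einc_of_vinc hef hve)

end FaceBoundary

variable [Fintype V] [Fintype E] [Fintype F]

theorem exists_isFaceBoundary_zmod_three (hconn : S.faceGraph.Connected)
    (hχ : Fintype.card V + Fintype.card F = Fintype.card E + 2) :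
    ∃ D : Matrix F E (ZMod 3), L.IsFaceBoundary D := by
  classical
  choose ι hι using S.exists_injOn_zmod_three
  have hB := L.faceBoundary_ne_zero_iff hι
  have hQB := L.incidence_mul_faceBoundary_transpose hι
  -- the `|F|` face boundaries lie in the cycle space, of dimension at most `|F| - 1`
  have hdep : ¬ LinearIndependent (ZMod 3) (L.faceBoundary ι).row := fun hli => by
    have h := rank_add_rank_le_card_of_mul_eq_zero hQB
    rw [rank_transpose, hli.rank_matrix] at h
    have := L.card_le_rank_incidence_add_one (ZMod 3) hconn
    have := Fintype.card_pos_iff.mpr hconn.nonempty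
    omega
  obtain ⟨lam, hlam, f₀, hf₀⟩ := Fintype.not_linearIndependent_iff.mp hdep
  have hedge : ∀ e, lam (L.face₁ e) * L.faceBoundary ι (L.face₁ e) e +
      lam (L.face₂ e) * L.faceBoundary ι (L.face₂ e) e = 0 := fun e => by
    rw [← L.vecMul_eq_of_support (fun f e => (hB f e).mp), vecMul_eq_sum]
    exact congrFun hlam e
  have hlam_zero : ∀ f, lam f = 0 ↔ lam f₀ = 0 := fun f => by
    refine Iff.of_eq (L.eq_of_forall_face_eq hconn (φ := fun f => lam f = 0) (fun e => ?_) f f₀)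
    have h₁ := (hB _ e).mpr (L.einc_face₁ e)
    have h₂ := (hB _ e).mpr (L.einc_face₂ e)
    have := hedge e
    refine propext ⟨fun h => ?_, fun h => ?_⟩
    · rw [h, zero_mul, zero_add] at this
      exact (mul_eq_zero.mp this).resolve_right h₂
    · rw [h, zero_mul, add_zero] at this
      exact (mul_eq_zero.mp this).resolve_right h₁
  refine ⟨diagonal lam * L.faceBoundary ι, ?_, fun f e => ?_, fun e => ?_⟩
  · rw [transpose_mul, diagonal_transpose, ← Matrix.mul_assoc, hQB, Matrix.zero_mul]
  · rw [diagonal_mul, ← hB f e]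
    exact ⟨right_ne_zero_of_mul, mul_ne_zero fun h => hf₀ ((hlam_zero f).mp h)⟩
  · simpa only [diagonal_mul] using hedge e

end EdgeLabelling

theorem EdgeLabelling.IsFaceBoundary.exists_mulVec_eq_zero [Fintype E] {L : S.EdgeLabelling}
    {D : Matrix F E (ZMod 3)} (hD : L.IsFaceBoundary D) {s : F → ZMod 3}
    (hs : ∀ e, s (L.face₂ e) = -s (L.face₁ e)) (hs₀ : ∀ f, s f ≠ 0) :
    ∃ x : E → ZMod 3, D *ᵥ x = 0 ∧ ∀ e, x e ≠ 0 := by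
  classical
  refine ⟨fun e => s (L.face₁ e) * D (L.face₁ e) e, ?_,
    fun e => mul_ne_zero (hs₀ _) ((hD.ne_zero_iff _ e).mpr (L.einc_face₁ e))⟩
  have hx : ∀ f e, S.einc e f → s (L.face₁ e) * D (L.face₁ e) e = s f * D f e := by
    intro f e he
    rcases (L.einc_iff e f).mp he with rfl | rfl
    · rfl
    · rw [hs, eq_neg_of_add_eq_zero_right (hD.face₁_add_face₂ e), neg_mul_neg]
  have hsq : ∀ z : ZMod 3, z ≠ 0 → z * z = 1 := by decide
  have hterm : ∀ f e, D f e * (s (L.face₁ e) * D (L.face₁ e) e) =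
      (if S.einc e f then 1 else 0) * s f := by
    intro f e
    by_cases he : S.einc e f
    · rw [hx f e he, if_pos he, mul_left_comm, hsq _ ((hD.ne_zero_iff f e).mpr he), mul_one,
        one_mul]
    · rw [if_neg he, not_not.mp (mt (hD.ne_zero_iff f e).mp he), zero_mul, zero_mul]
  ext f
  simp only [mulVec, dotProduct, hterm, ← Finset.sum_mul, Fintype.sum_boole_eq_ncard,
    S.face_three_edges, Pi.zero_apply]
  exact mul_eq_zero_of_left (by decide) _

variable [Fintype V] [Fintype E] [Fintype F]

theorem faceGraph_colorable_two (hconn : S.faceGraph.Connected)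
    (hχ : Fintype.card V + Fintype.card F = Fintype.card E + 2)
    (heven : ∀ v : V, Even {f | S.vfinc v f}.ncard) : S.faceGraph.Colorable 2 := by
  obtain ⟨L⟩ := S.nonempty_edgeLabelling
  have hone : (1 : E → ZMod 2) ∈ LinearMap.ker (L.incidence (ZMod 2)).mulVecLin :=
    L.incidence_mulVec_one_zmod_two heven
  rw [L.isFaceBoundary_faceIncidence.ker_incidence_eq_range hconn hχ] at hone
  obtain ⟨t, ht⟩ := hone
  have hsum : ∀ e, t (L.face₁ e) + t (L.face₂ e) = 1 := fun e => by
    have := congrFun ht e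
    rwa [mulVecLin_apply, mulVec_transpose,
      L.vecMul_eq_of_support (fun f e => (L.isFaceBoundary_faceIncidence.ne_zero_iff f e).mp),
      faceIncidence, faceIncidence, if_pos (L.einc_face₁ e), if_pos (L.einc_face₂ e),
      mul_one, mul_one] at this
  refine (SimpleGraph.Coloring.mk t fun hadj heq => ?_).colorable
  obtain ⟨e, ⟨rfl, rfl⟩ | ⟨rfl, rfl⟩⟩ := L.exists_of_faceGraph_adj hadj <;>
  · have := hsum e
    rw [heq, CharTwo.add_self_eq_zero] at this
    exact zero_ne_one this

theorem edgeGraph_colorable_three (hconn : S.faceGraph.Connected)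
    (hχ : Fintype.card V + Fintype.card F = Fintype.card E + 2)
    (heven : ∀ v : V, Even {f | S.vfinc v f}.ncard) : S.edgeGraph.Colorable 3 := by
  obtain ⟨L⟩ := S.nonempty_edgeLabelling
  obtain ⟨t⟩ := S.faceGraph_colorable_two hconn hχ heven
  obtain ⟨D, hD⟩ := L.exists_isFaceBoundary_zmod_three hconn hχ
  have hsign : ∀ a b : Fin 2, a ≠ b →
      (if b = 0 then 1 else -1 : ZMod 3) = -(if a = 0 then 1 else -1) := by decide
  obtain ⟨x, hDx, hx⟩ := hD.exists_mulVec_eq_zero (s := fun f => if t f = 0 then 1 else -1)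
    (fun e => hsign _ _ (t.valid (L.faceGraph_adj e))) (fun f => by split_ifs <;> decide)
  obtain ⟨c, hc⟩ : x ∈ LinearMap.range (L.incidence (ZMod 3))ᵀ.mulVecLin :=
    hD.ker_eq_range_incidence hconn hχ ▸ hDx
  refine (SimpleGraph.Coloring.mk c fun hadj heq => ?_).colorable
  obtain ⟨e, ⟨rfl, rfl⟩ | ⟨rfl, rfl⟩⟩ := L.exists_of_edgeGraph_adj hadj <;>
  · apply hx e
    rw [← congrFun hc e, mulVecLin_apply, mulVec_transpose, L.vecMul_incidence, heq, sub_self]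

end SimplicialSurface

theorem even_degrees_no_K4_general (S : SimplicialSurface V E F)
    [Finite V] [Finite E] [Finite F]
    (hconn : S.faceGraph.Connected)
    (hsphere : S.eulerChar = 2)
    (heven : ∀ v : V, Even {f | S.vfinc v f}.ncard) :
    ¬ ∃ g : Fin 4 → V, Function.Injective g ∧
      ∀ i j, i ≠ j → S.edgeGraph.Adj (g i) (g j) := by
  rintro ⟨g, hg, hadj⟩
  have := Fintype.ofFinite V
  have := Fintype.ofFinite E
  have := Fintype.ofFinite F
  have hχ : Fintype.card V + Fintype.card F = Fintype.card E + 2 := by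
    simp only [SimplicialSurface.eulerChar, Nat.card_eq_fintype_card] at hsphere
    omega
  have hclique : S.edgeGraph.IsNClique 4 (Finset.univ.map ⟨g, hg⟩) := by
    refine ⟨?_, by simp⟩
    simp only [Finset.coe_map, Finset.coe_univ, Set.image_univ]
    rintro _ ⟨i, rfl⟩ _ ⟨j, rfl⟩ hij
    exact hadj i j (ne_of_apply_ne g hij)
  exact (S.edgeGraph_colorable_three hconn hχ heven).cliqueFree (by norm_num) _ hclique

/-- A connected vertex-faithful simplicial sphere not isomorphic to
the tetrahedron all of whose vertex degrees are even has no `K4` subgraph in its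
edge graph. (The tetrahedron has vertex and face sets `Fin 4`, edges the
non-diagonal elements of `Sym2 (Fin 4)`, a vertex on an edge iff it is a member,
and an edge on a face iff the face-label is not a member.) -/
theorem even_degrees_no_K4 (S : SimplicialSurface V E F)
    [Finite V] [Finite E] [Finite F]
    (hvf : S.VertexFaithful) (hconn : S.faceGraph.Connected)
    (hsphere : S.eulerChar = 2)
    (hnotTet : ¬ ∃ (av : V ≃ Fin 4) (ae : E ≃ {e : Sym2 (Fin 4) // ¬ e.IsDiag})
      (af : F ≃ Fin 4),
      (∀ v e, S.vinc v e ↔ av v ∈ (ae e).1) ∧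
      (∀ e f, S.einc e f ↔ af f ∉ (ae e).1))
    (heven : ∀ v : V, Even {f | S.vfinc v f}.ncard) :
    ¬ ∃ g : Fin 4 → V, Function.Injective g ∧
      ∀ i j, i ≠ j → S.edgeGraph.Adj (g i) (g j) :=
  even_degrees_no_K4_general S hconn hsphere heven
end

section
/- In the face graph of a simplicial surface, no two distinct umbrella cycles intersect in exactly one node. -/
variable {V E F : Type}

/-- In the face graph of a simplicial surface, the umbrella cycles
of two distinct vertices never intersect in exactly one node; the node set of
the umbrella cycle of `v` is the set of faces incident to `v`. -/
theorem umbrella_cycles_not_one_node (S : SimplicialSurface V E F)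
    (v w : V) (hvw : v ≠ w) :
    {f | S.vfinc v f ∧ S.vfinc w f}.ncard ≠ 1 := by
  intro h1
  obtain ⟨f, hf⟩ := Set.ncard_eq_one.mp h1
  have hfmem : S.vfinc v f ∧ S.vfinc w f := by
    have : f ∈ ({f} : Set F) := rfl
    rw [← hf] at this; exact this
  set A := {e | S.einc e f ∧ S.vinc v e} with hA
  set B := {e | S.einc e f ∧ S.vinc w e} with hB
  set Ef := {e | S.einc e f} with hEf
  have hEfcard : Ef.ncard = 3 := S.face_three_edges f
  have hEffin : Ef.Finite := by
    by_contra hinf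
    rw [Set.Infinite.ncard hinf] at hEfcard
    exact (by norm_num : (0:ℕ) ≠ 3) hEfcard
  have hAsub : A ⊆ Ef := fun e he => he.1
  have hBsub : B ⊆ Ef := fun e he => he.1
  have hAfin : A.Finite := hEffin.subset hAsub
  have hBfin : B.Finite := hEffin.subset hBsub
  have hAcard : A.ncard = 2 := S.face_vertex_two_edges f v hfmem.1
  have hBcard : B.ncard = 2 := S.face_vertex_two_edges f w hfmem.2
  have hunion : (A ∪ B).ncard ≤ 3 := by
    rw [← hEfcard]
    exact Set.ncard_le_ncard (Set.union_subset hAsub hBsub) hEffin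
  have hsum : (A ∪ B).ncard + (A ∩ B).ncard = A.ncard + B.ncard :=
    Set.ncard_union_add_ncard_inter A B hAfin hBfin
  have hinter : (A ∩ B).ncard ≠ 0 := by omega
  have hne : (A ∩ B).Nonempty := Set.nonempty_of_ncard_ne_zero hinter
  obtain ⟨e, heA, heB⟩ := hne
  obtain ⟨g₁, g₂, hgne, hgs⟩ := Set.ncard_eq_two.mp (S.edge_two_faces e)
  have hmem : ∀ g, S.einc e g → g ∈ {f | S.vfinc v f ∧ S.vfinc w f} := by
    intro g hg
    exact ⟨(S.vfinc_iff v g).mpr ⟨e, heA.2, hg⟩, (S.vfinc_iff w g).mpr ⟨e, heB.2, hg⟩⟩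
  have h1' : S.einc e g₁ := by
    have : g₁ ∈ {f | S.einc e f} := by rw [hgs]; left; rfl
    exact this
  have h2' : S.einc e g₂ := by
    have : g₂ ∈ {f | S.einc e f} := by rw [hgs]; right; rfl
    exact this
  have e1 : g₁ = f := by have := hmem g₁ h1'; rw [hf] at this; exact this
  have e2 : g₂ = f := by have := hmem g₂ h2'; rw [hf] at this; exact this
  exact hgne (e1.trans e2.symm)
end
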